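/- arXiv:2312.09368 — 8 statements merged into one kernel-verified Lean document; each statement's English description precedes it below -/
import Mathlib

section
/- Let σ be a continuous (atomless) probability measure on ℝ that is symmetric, i.e., invariant under the map x ↦ −x, let n ≥ 1, and let Z_1,…,Z_n be independent random variables each with distribution σ. Then the probability that ∑_{i=1}^k Z_i > 0 for every k with 1 ≤ k ≤ n equals (2n choose n)/4^n. -/
/-!
Write `S₀ = 0, S₁, …, Sₙ` for the partial sums and `pₙ` for the probability that `S₁, …, Sₙ`
are all positive. As `σ` is atomless, almost surely the maximum of `S₀, …, Sₙ` is attained at a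
single index `k`. That event splits into an event of `Z₁, …, Z_k` (read backwards from `Z_k`, all
partial sums are positive) and an independent event of `Z_{k+1}, …, Zₙ` (all partial sums are
negative, which by symmetry has probability `p_{n-k}`). Hence `∑ₖ p_k p_{n-k} = 1` for every `n`.
This convolution equation has only one solution, and `C(2n, n) / 4ⁿ` is one, by
`∑ₖ C(2k, k) C(2(n-k), n-k) = 4ⁿ`.
-/

open MeasureTheory ProbabilityTheory Finset
open scoped ENNReal

namespace Nat

theorem two_mul_sum_antidiagonal_fst_mul {R : Type*} [CommSemiring R] (f : ℕ → R) (n : ℕ) :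
    2 * ∑ x ∈ antidiagonal n, (x.1 : R) * (f x.1 * f x.2) =
      n * ∑ x ∈ antidiagonal n, f x.1 * f x.2 := by
  have hswap : ∑ x ∈ antidiagonal n, (x.2 : R) * (f x.1 * f x.2) =
      ∑ x ∈ antidiagonal n, (x.1 : R) * (f x.1 * f x.2) := by
    rw [← Nat.sum_antidiagonal_swap]
    exact sum_congr rfl fun x _ => by simp only [Prod.fst_swap, Prod.snd_swap]; ring
  rw [two_mul, Finset.mul_sum]
  nth_rewrite 2 [← hswap]
  rw [← Finset.sum_add_distrib]
  refine Finset.sum_congr rfl fun x hx => ?_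
  rw [← add_mul, ← Nat.cast_add, mem_antidiagonal.1 hx]

theorem sum_antidiagonal_centralBinom_mul (n : ℕ) :
    ∑ x ∈ antidiagonal n, x.1.centralBinom * x.2.centralBinom = 4 ^ n := by
  induction n with
  | zero => simp
  | succ n ih =>
    have hweight := two_mul_sum_antidiagonal_fst_mul centralBinom n
    have hweight' := two_mul_sum_antidiagonal_fst_mul centralBinom (n + 1)
    simp only [Nat.cast_id] at hweight hweight'
    -- `(k + 1) c (k + 1) = 2 (2k + 1) c k` expresses the weighted sum at `n + 1` through `n`.
    have hshift : ∑ x ∈ antidiagonal (n + 1), x.1 * (x.1.centralBinom * x.2.centralBinom) =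
        2 * (2 * ∑ x ∈ antidiagonal n, x.1 * (x.1.centralBinom * x.2.centralBinom)) +
          2 * ∑ x ∈ antidiagonal n, x.1.centralBinom * x.2.centralBinom := by
      rw [Nat.sum_antidiagonal_succ, zero_mul, zero_add, Finset.mul_sum, Finset.mul_sum,
        Finset.mul_sum, ← Finset.sum_add_distrib]
      refine Finset.sum_congr rfl fun x _ => ?_
      rw [← mul_assoc, succ_mul_centralBinom_succ]
      ring
    refine Nat.eq_of_mul_eq_mul_left (by omega : 0 < n + 1) ?_
    rw [← hweight', hshift, hweight, ih]
    ring

end Nat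

theorem ENNReal.sum_antidiagonal_centralBinom_div_four_pow_mul (n : ℕ) :
    ∑ x ∈ antidiagonal n, (x.1.centralBinom / 4 ^ x.1 : ℝ≥0∞) * (x.2.centralBinom / 4 ^ x.2) =
      1 := by
  have hterm : ∀ x ∈ antidiagonal n, (x.1.centralBinom / 4 ^ x.1 : ℝ≥0∞) *
      (x.2.centralBinom / 4 ^ x.2) =
        ((x.1.centralBinom * x.2.centralBinom : ℕ) : ℝ≥0∞) * 4⁻¹ ^ n := by
    intro x hx
    rw [← HasAntidiagonal.mem_antidiagonal.1 hx, div_eq_mul_inv, div_eq_mul_inv, ENNReal.inv_pow,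
      ENNReal.inv_pow, pow_add, Nat.cast_mul]
    ring
  rw [sum_congr rfl hterm, ← sum_mul, ← Nat.cast_sum, Nat.sum_antidiagonal_centralBinom_mul,
    Nat.cast_pow, Nat.cast_ofNat, ← mul_pow, ENNReal.mul_inv_cancel (by norm_num) (by norm_num),
    one_pow]

theorem ENNReal.eq_of_sum_antidiagonal_mul_eq_one {p q : ℕ → ℝ≥0∞}
    (hp : ∀ n, ∑ x ∈ antidiagonal n, p x.1 * p x.2 = 1)
    (hq : ∀ n, ∑ x ∈ antidiagonal n, q x.1 * q x.2 = 1) : p = q := by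
  have hzero {r : ℕ → ℝ≥0∞} (hr : ∀ n, ∑ x ∈ antidiagonal n, r x.1 * r x.2 = 1) :
      r 0 = 1 :=
    (ENNReal.pow_right_strictMono two_ne_zero).injective (by simpa [sq] using hr 0)
  -- the remaining terms only involve `r 0, …, r (n - 1)`
  have hsplit {r : ℕ → ℝ≥0∞} (n : ℕ) (hn : n ≠ 0) :
      ∑ x ∈ antidiagonal n, r x.1 * r x.2 = 2 * (r 0 * r n) +
        ∑ x ∈ ((antidiagonal n).erase (0, n)).erase (n, 0), r x.1 * r x.2 := by
    rw [← add_sum_erase _ _ (a := (0, n)) (by simp),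
      ← add_sum_erase _ _ (a := (n, 0)) (by simp [hn])]
    ring
  funext n
  induction n using Nat.strong_induction_on with
  | _ n ih =>
    rcases eq_or_ne n 0 with rfl | hn
    · rw [hzero hp, hzero hq]
    have hrest : ∑ x ∈ ((antidiagonal n).erase (0, n)).erase (n, 0), p x.1 * p x.2 =
        ∑ x ∈ ((antidiagonal n).erase (0, n)).erase (n, 0), q x.1 * q x.2 := by
      refine sum_congr rfl fun x hx => ?_
      simp only [mem_erase, HasAntidiagonal.mem_antidiagonal, ne_eq, Prod.ext_iff] at hx
      rw [ih x.1 (by omega), ih x.2 (by omega)]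
    have hfin : ∑ x ∈ ((antidiagonal n).erase (0, n)).erase (n, 0), q x.1 * q x.2 ≠ ∞ :=
      ne_top_of_le_ne_top one_ne_top (hq n ▸ (hsplit n hn).symm ▸ le_add_self)
    have h : 2 * (p 0 * p n) + ∑ x ∈ ((antidiagonal n).erase (0, n)).erase (n, 0), p x.1 * p x.2 =
        2 * (q 0 * q n) + ∑ x ∈ ((antidiagonal n).erase (0, n)).erase (n, 0), q x.1 * q x.2 := by
      rw [← hsplit n hn, ← hsplit n hn, hp, hq]
    rw [hrest, hzero hp, hzero hq, ENNReal.add_left_inj hfin, one_mul, one_mul] at h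
    exact (ENNReal.mul_right_inj two_ne_zero ofNat_ne_top).1 h

theorem measurePreserving_pi_rev {α : Type*} [MeasurableSpace α] (μ : Measure α) [SigmaFinite μ]
    (n : ℕ) :
    MeasurePreserving (fun (x : Fin n → α) (i : Fin n) => x i.rev) (Measure.pi fun _ => μ)
      (Measure.pi fun _ => μ) := by
  convert measurePreserving_piCongrLeft (fun _ : Fin n => μ) Fin.revPerm using 1
  ext x i
  simp [MeasurableEquiv.coe_piCongrLeft, Equiv.piCongrLeft_apply_eq_cast]

theorem measurable_finAppend {α : Type*} [MeasurableSpace α] (k m : ℕ) :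
    Measurable fun p : (Fin k → α) × (Fin m → α) => Fin.append p.1 p.2 := by
  refine measurable_pi_lambda _ fun i => ?_
  induction i using Fin.addCases with
  | left i => simp only [Fin.append_left]; fun_prop
  | right i => simp only [Fin.append_right]; fun_prop

theorem measurePreserving_finAppend {α : Type*} [MeasurableSpace α] (μ : Measure α)
    [SigmaFinite μ] (k m : ℕ) :
    MeasurePreserving (fun p : (Fin k → α) × (Fin m → α) => Fin.append p.1 p.2)
      ((Measure.pi fun _ => μ).prod (Measure.pi fun _ => μ)) (Measure.pi fun _ => μ) := by
  refine ⟨measurable_finAppend k m, (Measure.pi_eq fun s hs => ?_).symm⟩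
  have hpre : (fun p : (Fin k → α) × (Fin m → α) => Fin.append p.1 p.2) ⁻¹' Set.univ.pi s =
      Set.univ.pi (fun i => s (Fin.castAdd m i)) ×ˢ
        Set.univ.pi (fun i => s (Fin.natAdd k i)) := by
    ext p
    simp [Set.mem_pi, Fin.forall_fin_add]
  rw [Measure.map_apply (measurable_finAppend k m) (.univ_pi hs), hpre, Measure.prod_prod,
    Measure.pi_pi, Measure.pi_pi, Fin.prod_univ_add]

theorem measure_pi_setOf_apply_eq_null {α : Type*} [MeasurableSpace α] [MeasurableEq α] {n : ℕ}
    (μ : Fin (n + 1) → Measure α) [∀ i, SigmaFinite (μ i)] (i : Fin (n + 1))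
    [NullSingletonClass (μ i)] {g : (Fin n → α) → α} (hg : Measurable g) :
    Measure.pi μ {x | x i = g (i.removeNth x)} = 0 := by
  set S : Set (α × (Fin n → α)) := {p | p.1 = g p.2}
  have hS : MeasurableSet S := measurableSet_eq_fun measurable_fst (hg.comp measurable_snd)
  have hpre : {x | x i = g (i.removeNth x)} =
      MeasurableEquiv.piFinSuccAbove (fun _ => α) i ⁻¹' S := rfl
  rw [hpre, (measurePreserving_piFinSuccAbove μ i).measure_preimage hS.nullMeasurableSet,
    Measure.prod_apply_symm hS]
  simp [S]

theorem measure_pi_setOf_sum_eq_null {n : ℕ} (μ : Fin n → Measure ℝ) [∀ i, SigmaFinite (μ i)]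
    [∀ i, NullSingletonClass (μ i)] {s : Finset (Fin n)} (hs : s.Nonempty) (c : ℝ) :
    Measure.pi μ {x | ∑ i ∈ s, x i = c} = 0 := by
  obtain ⟨i, hi⟩ := hs
  cases n with
  | zero => exact i.elim0
  | succ n =>
    have hsum (x : Fin (n + 1) → ℝ) : ∑ i ∈ s, x i =
        x i + ∑ j ∈ univ.filter (fun j => i.succAbove j ∈ s), i.removeNth x j := by
      rw [← Fintype.sum_ite_mem, Fin.sum_univ_succAbove _ i, if_pos hi, Finset.sum_filter]
      rfl
    have hset : {x : Fin (n + 1) → ℝ | ∑ i ∈ s, x i = c} =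
        {x | x i = c - ∑ j ∈ univ.filter (fun j => i.succAbove j ∈ s), i.removeNth x j} := by
      ext x
      simp only [Set.mem_ofPred_eq, hsum x, eq_sub_iff_add_eq]
    rw [hset]
    exact measure_pi_setOf_apply_eq_null μ i
      (g := fun y => c - ∑ j ∈ univ.filter (fun j => i.succAbove j ∈ s), y j) (by fun_prop)

section PartialSums

variable {n : ℕ}

def partialSum (x : Fin n → ℝ) (k : ℕ) : ℝ :=
  ∑ i ∈ univ.filter (fun i : Fin n => (i : ℕ) < k), x i

def allPartialSumsPos (n : ℕ) : Set (Fin n → ℝ) :=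
  {x | ∀ k, 1 ≤ k → k ≤ n → 0 < partialSum x k}

def allPartialSumsNeg (n : ℕ) : Set (Fin n → ℝ) :=
  {x | ∀ k, 1 ≤ k → k ≤ n → partialSum x k < 0}

def partialSumMaxAt (n k : ℕ) : Set (Fin n → ℝ) :=
  {x | ∀ j ≤ n, j ≠ k → partialSum x j < partialSum x k}

theorem measurable_partialSum (k : ℕ) : Measurable fun x : Fin n → ℝ => partialSum x k :=
  Finset.measurable_sum _ fun i _ => measurable_pi_apply i

theorem measurableSet_allPartialSumsPos (n : ℕ) : MeasurableSet (allPartialSumsPos n) := by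
  simp only [allPartialSumsPos, Set.ofPred_forall]
  exact .iInter fun k => .iInter fun _ => .iInter fun _ =>
    measurableSet_lt measurable_const (measurable_partialSum k)

theorem measurableSet_partialSumMaxAt (n k : ℕ) : MeasurableSet (partialSumMaxAt n k) := by
  simp only [partialSumMaxAt, Set.ofPred_forall]
  exact .iInter fun j => .iInter fun _ => .iInter fun _ =>
    measurableSet_lt (measurable_partialSum j) (measurable_partialSum k)

theorem partialSum_add_sum_filter (x : Fin n → ℝ) {j k : ℕ} (h : j ≤ k) :
    partialSum x j + ∑ i ∈ univ.filter (fun i : Fin n => j ≤ (i : ℕ) ∧ (i : ℕ) < k), x i =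
      partialSum x k := by
  rw [partialSum, partialSum, ← sum_union]
  · congr 1; ext i; simp only [mem_union, mem_filter, mem_univ, true_and]; omega
  · exact disjoint_filter.2 fun i _ h h' => by omega

theorem partialSum_rev (x : Fin n → ℝ) (k : ℕ) :
    partialSum (fun i => x i.rev) k = partialSum x n - partialSum x (n - k) := by
  rw [← partialSum_add_sum_filter x (Nat.sub_le n k), add_sub_cancel_left, partialSum]
  exact sum_equiv Fin.revPerm (fun i => by simp; omega) fun i _ => rfl

theorem partialSum_neg (x : Fin n → ℝ) (k : ℕ) :
    partialSum (fun i => -x i) k = -partialSum x k := by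
  simp [partialSum]

theorem partialSum_append_of_le {m : ℕ} (a : Fin n → ℝ) (b : Fin m → ℝ) {j : ℕ}
    (hj : j ≤ n) : partialSum (Fin.append a b) j = partialSum a j := by
  simp only [partialSum, sum_filter, Fin.sum_univ_add, Fin.append_left, Fin.append_right,
    Fin.val_castAdd, Fin.val_natAdd, add_eq_left]
  exact Fintype.sum_eq_zero _ fun i => if_neg (by omega)

theorem partialSum_append_add {m : ℕ} (a : Fin n → ℝ) (b : Fin m → ℝ) (d : ℕ) :
    partialSum (Fin.append a b) (n + d) = partialSum a n + partialSum b d := by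
  simp only [partialSum, sum_filter, Fin.sum_univ_add, Fin.append_left, Fin.append_right]
  congr 1 <;> refine Fintype.sum_congr _ _ fun i => ?_
  · simp [Nat.lt_add_right d i.isLt]
  · simp

theorem preimage_neg_allPartialSumsPos (n : ℕ) :
    (fun (x : Fin n → ℝ) i => -x i) ⁻¹' allPartialSumsPos n = allPartialSumsNeg n := by
  ext x
  simp [allPartialSumsPos, allPartialSumsNeg, partialSum_neg]

theorem preimage_rev_allPartialSumsPos (n : ℕ) :
    (fun (x : Fin n → ℝ) (i : Fin n) => x i.rev) ⁻¹' allPartialSumsPos n =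
      partialSumMaxAt n n := by
  ext x
  simp only [allPartialSumsPos, partialSumMaxAt, Set.mem_preimage, Set.mem_ofPred_eq,
    partialSum_rev, sub_pos]
  constructor
  · intro h j hj hjn
    simpa [Nat.sub_sub_self hj] using h (n - j) (by omega) (Nat.sub_le n j)
  · intro h k hk hkn
    exact h (n - k) (Nat.sub_le n k) (by omega)

theorem preimage_append_partialSumMaxAt (k m : ℕ) :
    (fun p : (Fin k → ℝ) × (Fin m → ℝ) => Fin.append p.1 p.2) ⁻¹' partialSumMaxAt (k + m) k =
      partialSumMaxAt k k ×ˢ allPartialSumsNeg m := by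
  ext ⟨a, b⟩
  simp only [partialSumMaxAt, allPartialSumsNeg, Set.mem_preimage, Set.mem_prod,
    Set.mem_ofPred_eq, partialSum_append_of_le a b le_rfl]
  constructor
  · intro h
    refine ⟨fun j hj hjk => ?_, fun d hd hdm => ?_⟩
    · simpa only [partialSum_append_of_le a b hj] using h j (by omega) hjk
    · simpa only [partialSum_append_add, add_lt_iff_neg_left] using
        h (k + d) (by omega) (by omega)
  · rintro ⟨ha, hb⟩ j hj hjk
    rcases le_or_gt j k with hjk' | hkj
    · rw [partialSum_append_of_le a b hjk']
      exact ha j hjk' hjk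
    · obtain ⟨d, rfl⟩ := Nat.exists_eq_add_of_lt hkj
      rw [show k + d + 1 = k + (d + 1) by ring, partialSum_append_add, add_lt_iff_neg_left]
      exact hb (d + 1) (by omega) (by omega)

theorem pairwiseDisjoint_partialSumMaxAt (n : ℕ) :
    (range (n + 1) : Set ℕ).PairwiseDisjoint (partialSumMaxAt n) := by
  intro k hk k' hk' hne
  simp only [coe_range, Set.mem_Iio] at hk hk'
  exact Set.disjoint_left.2 fun x hx hx' =>
    (hx k' (by omega) (Ne.symm hne)).not_gt (hx' k (by omega) hne)

theorem compl_iUnion_partialSumMaxAt_subset (n : ℕ) :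
    (⋃ k ∈ range (n + 1), partialSumMaxAt n k)ᶜ ⊆
      ⋃ (j : ℕ) (k : ℕ) (_ : j < k) (_ : k ≤ n), {x | partialSum x j = partialSum x k} := by
  intro x hx
  obtain ⟨k, hk, hmax⟩ :=
    exists_max_image (range (n + 1)) (partialSum x) nonempty_range_add_one
  simp only [Set.mem_compl_iff, Set.mem_iUnion, not_exists, partialSumMaxAt, Set.mem_ofPred_eq,
    not_forall, not_lt] at hx
  obtain ⟨j, hj, hjk, hle⟩ := hx k hk
  have heq := le_antisymm (hmax j (mem_range.2 (by omega))) hle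
  rw [mem_range] at hk
  simp only [Set.mem_iUnion, Set.mem_ofPred_eq]
  rcases lt_or_gt_of_ne hjk with h | h
  · exact ⟨j, k, h, by omega, heq⟩
  · exact ⟨k, j, h, hj, heq.symm⟩

end PartialSums

section IID

variable {σ : Measure ℝ}

theorem measure_allPartialSumsNeg [SigmaFinite σ] (hsym : σ.map (fun x => -x) = σ) (n : ℕ) :
    Measure.pi (fun _ : Fin n => σ) (allPartialSumsNeg n) =
      Measure.pi (fun _ : Fin n => σ) (allPartialSumsPos n) := by
  have : SigmaFinite (σ.map fun x => -x) := by rwa [hsym]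
  rw [← preimage_neg_allPartialSumsPos, ← Measure.map_apply (by fun_prop)
    (measurableSet_allPartialSumsPos n), Measure.pi_map_pi fun _ => measurable_neg.aemeasurable,
    hsym]

theorem measure_partialSumMaxAt_self [SigmaFinite σ] (n : ℕ) :
    Measure.pi (fun _ : Fin n => σ) (partialSumMaxAt n n) =
      Measure.pi (fun _ : Fin n => σ) (allPartialSumsPos n) := by
  rw [← preimage_rev_allPartialSumsPos, (measurePreserving_pi_rev σ n).measure_preimage
    (measurableSet_allPartialSumsPos n).nullMeasurableSet]

theorem measure_partialSumMaxAt_add [SigmaFinite σ] (hsym : σ.map (fun x => -x) = σ) (k m : ℕ) :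
    Measure.pi (fun _ : Fin (k + m) => σ) (partialSumMaxAt (k + m) k) =
      Measure.pi (fun _ : Fin k => σ) (allPartialSumsPos k) *
        Measure.pi (fun _ : Fin m => σ) (allPartialSumsPos m) := by
  rw [← (measurePreserving_finAppend σ k m).measure_preimage
    (measurableSet_partialSumMaxAt _ _).nullMeasurableSet, preimage_append_partialSumMaxAt,
    Measure.prod_prod, measure_partialSumMaxAt_self, measure_allPartialSumsNeg hsym]

theorem measure_iUnion_partialSumMaxAt [IsProbabilityMeasure σ] [NullSingletonClass σ] (n : ℕ) :
    Measure.pi (fun _ : Fin n => σ) (⋃ k ∈ range (n + 1), partialSumMaxAt n k) = 1 := by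
  rw [← prob_compl_eq_zero_iff
    (Finset.measurableSet_biUnion _ fun k _ => measurableSet_partialSumMaxAt n k)]
  refine measure_mono_null (compl_iUnion_partialSumMaxAt_subset n) ?_
  refine measure_iUnion_null fun j => measure_iUnion_null fun k =>
    measure_iUnion_null fun hjk => measure_iUnion_null fun hk => ?_
  have hset : {x : Fin n → ℝ | partialSum x j = partialSum x k} =
      {x | ∑ i ∈ univ.filter (fun i : Fin n => j ≤ (i : ℕ) ∧ (i : ℕ) < k), x i = 0} := by
    ext x
    rw [Set.mem_ofPred_eq, Set.mem_ofPred_eq, ← partialSum_add_sum_filter x hjk.le,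
      left_eq_add]
  rw [hset]
  exact measure_pi_setOf_sum_eq_null (fun _ => σ) ⟨⟨j, by omega⟩, by simpa using hjk⟩ 0

theorem sum_antidiagonal_measure_allPartialSumsPos_mul [IsProbabilityMeasure σ]
    [NullSingletonClass σ] (hsym : σ.map (fun x => -x) = σ) (n : ℕ) :
    ∑ x ∈ antidiagonal n, Measure.pi (fun _ : Fin x.1 => σ) (allPartialSumsPos x.1) *
      Measure.pi (fun _ : Fin x.2 => σ) (allPartialSumsPos x.2) = 1 := by
  rw [← measure_iUnion_partialSumMaxAt (σ := σ) n, measure_biUnion_finset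
    (pairwiseDisjoint_partialSumMaxAt n) fun k _ => measurableSet_partialSumMaxAt n k,
    Nat.sum_antidiagonal_eq_sum_range_succ_mk]
  refine sum_congr rfl fun k hk => ?_
  obtain ⟨m, rfl⟩ := Nat.exists_eq_add_of_le (Nat.lt_succ_iff.1 (mem_range.1 hk))
  rw [Nat.add_sub_cancel_left, measure_partialSumMaxAt_add hsym]

theorem measure_allPartialSumsPos [IsProbabilityMeasure σ] [NullSingletonClass σ]
    (hsym : σ.map (fun x => -x) = σ) (n : ℕ) :
    Measure.pi (fun _ : Fin n => σ) (allPartialSumsPos n) = n.centralBinom / 4 ^ n :=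
  congrFun (ENNReal.eq_of_sum_antidiagonal_mul_eq_one
    (p := fun n => Measure.pi (fun _ : Fin n => σ) (allPartialSumsPos n))
    (q := fun n => n.centralBinom / 4 ^ n)
    (sum_antidiagonal_measure_allPartialSumsPos_mul hsym)
    ENNReal.sum_antidiagonal_centralBinom_div_four_pow_mul) n

end IID

theorem symmetric_partial_sums_positive_probability_general
    {Ω : Type*} [MeasurableSpace Ω] (P : Measure Ω) [IsProbabilityMeasure P]
    (σ : Measure ℝ) [IsProbabilityMeasure σ] (hatomless : ∀ x : ℝ, σ {x} = 0)
    (hsym : Measure.map (fun x : ℝ => -x) σ = σ)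
    (n : ℕ)
    (Z : Fin n → Ω → ℝ)
    (hZmeas : ∀ i, Measurable (Z i))
    (hindep : iIndepFun Z P)
    (hZlaw : ∀ i, Measure.map (Z i) P = σ) :
    P {ω | ∀ k : ℕ, 1 ≤ k → k ≤ n →
        0 < ∑ i ∈ univ.filter (fun i : Fin n => (i : ℕ) < k), Z i ω} =
      (Nat.choose (2 * n) n : ℝ≥0∞) / 4 ^ n := by
  have : NullSingletonClass σ := ⟨hatomless⟩
  have hlaw : P.map (fun ω i => Z i ω) = Measure.pi fun _ : Fin n => σ := by
    rw [hindep.map_fun_eq_pi_map fun i => (hZmeas i).aemeasurable]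
    simp only [hZlaw]
  change P ((fun ω i => Z i ω) ⁻¹' allPartialSumsPos n) = _
  rw [← Measure.map_apply (measurable_pi_lambda _ hZmeas) (measurableSet_allPartialSumsPos n),
    hlaw]
  exact measure_allPartialSumsPos hsym n

/-- If `σ` is an atomless, symmetric (invariant under negation) probability measure on `ℝ`
and `Z 0, …, Z (n-1)` are independent random variables each with law `σ`, then the
probability that all partial sums are strictly positive is `(2n choose n) / 4^n`. -/
theorem symmetric_partial_sums_positive_probability
    {Ω : Type*} [MeasurableSpace Ω] (P : Measure Ω) [IsProbabilityMeasure P]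
    (σ : Measure ℝ) [IsProbabilityMeasure σ] (hatomless : ∀ x : ℝ, σ {x} = 0)
    (hsym : Measure.map (fun x : ℝ => -x) σ = σ)
    (n : ℕ) (hn : 1 ≤ n)
    (Z : Fin n → Ω → ℝ)
    (hZmeas : ∀ i, Measurable (Z i))
    (hindep : iIndepFun Z P)
    (hZlaw : ∀ i, Measure.map (Z i) P = σ) :
    P {ω | ∀ k : ℕ, 1 ≤ k → k ≤ n →
        0 < ∑ i ∈ univ.filter (fun i : Fin n => (i : ℕ) < k), Z i ω} =
      (Nat.choose (2 * n) n : ℝ≥0∞) / 4 ^ n :=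
  symmetric_partial_sums_positive_probability_general P σ hatomless hsym n Z hZmeas hindep hZlaw
end

section
/- Let n ≥ 1 and let a : Fin n → ℝ be a family of real numbers that is linearly independent over ℚ. Let b be the number of pairs (π, ε), where π is a permutation of Fin n and ε ∈ {−1,+1}^n, such that the signed permutation s_i = ε_i · a_{π(i)} satisfies ∑_{i=1}^k s_i > 0 for all 1 ≤ k ≤ n. Then 2^n · b = n! · (2n choose n); equivalently, b = (2n)!/(2^n · n!). -/
/-!
Sparre Andersen's decomposition. Cut a signed arrangement where its partial sums (the empty
one included) reach their maximum. Read backwards, the part before the cut has positive partial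
sums; the part after it has negative ones, i.e. it is a ballot sequence once its signs are
flipped. For a family linearly independent over `ℚ` no two partial sums coincide, so the cut is
unique and the `2^|S| |S|!` signed arrangements of an index set `S` correspond to pairs of
ballot arrangements of `B` and of `S \ B`, for `B ⊆ S`. Writing `b(S)` for the number of ballot
arrangements of `S`, the terms `B = ∅` and `B = S` of `2^|S| |S|! = ∑_B b(B) b(S \ B)` both
equal `b(S)`, so by strong induction `b(S)` depends only on `|S|`, and `(2|S| - 1)‼` satisfies
the same recursion.
-/

open Finset

/-- The ballot property for the signed permutation determined by `(π, ε)` and the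
family `a`: every partial sum `∑_{i<k} ε i • a (π i)` (for `1 ≤ k ≤ n`) is positive. -/
def SignedPermBallot {n : ℕ} (a : Fin n → ℝ) (p : Equiv.Perm (Fin n) × (Fin n → ℤˣ)) : Prop :=
  ∀ k : ℕ, 1 ≤ k → k ≤ n →
    0 < ∑ i ∈ univ.filter (fun i : Fin n => (i : ℕ) < k), ((p.2 i : ℤ) : ℝ) * a (p.1 i)

open scoped Nat

namespace List

variable {α β : Type*}

def IsBallot (w : α → ℝ) (l : List α) : Prop :=
  ∀ t, t <+: l → t ≠ [] → 0 < (t.map w).sum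

variable {w : α → ℝ}

theorem sum_map_neg (t : List α) : (t.map (-w)).sum = -(t.map w).sum := by
  rw [sum_neg, map_map]
  rfl

theorem isBallot_nil : ([] : List α).IsBallot w :=
  fun _ ht hne => absurd (prefix_nil.mp ht) hne

theorem IsBallot.sum_nonneg {l t : List α} (h : l.IsBallot w) (ht : t <+: l) :
    0 ≤ (t.map w).sum := by
  rcases eq_or_ne t [] with rfl | hne
  · simp
  · exact (h t ht hne).le

theorem IsBallot.sum_pos_of_suffix {y t : List α} (h : y.reverse.IsBallot w) (ht : t <:+ y)
    (hne : t ≠ []) : 0 < (t.map w).sum := by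
  simpa using h t.reverse (reverse_prefix.mpr ht) (by simpa using hne)

theorem IsBallot.sum_nonneg_of_suffix {y t : List α} (h : y.reverse.IsBallot w) (ht : t <:+ y) :
    0 ≤ (t.map w).sum := by
  simpa using h.sum_nonneg (reverse_prefix.mpr ht)

theorem isBallot_map {f : β → α} {l : List β} : (l.map f).IsBallot w ↔ l.IsBallot (w ∘ f) := by
  constructor
  · intro h t ht hne
    rw [← map_map]
    exact h _ (ht.map f) (by simpa using hne)
  · intro h t ht hne
    obtain ⟨t, ht', rfl⟩ := prefix_map_iff.mp ht
    rw [map_map]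
    exact h t ht' (by simpa using hne)

theorem isBallot_ofFn_iff {n : ℕ} {f : Fin n → α} :
    (ofFn f).IsBallot w ↔
      ∀ k, 1 ≤ k → k ≤ n → 0 < ∑ i ∈ univ.filter (fun i : Fin n => (i : ℕ) < k), w (f i) := by
  constructor
  · intro h k hk hkn
    have := h ((ofFn f).take k) (take_prefix _ _) (by simp; omega)
    rwa [map_take, map_ofFn, sum_take_ofFn] at this
  · intro h t ht hne
    rw [prefix_iff_eq_take.mp ht, map_take, map_ofFn, sum_take_ofFn]
    exact h _ (length_pos_iff.mpr hne) (by simpa using ht.length_le)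

theorem sum_prefix_le_of_ballot_split {y z t : List α} (hy : y.reverse.IsBallot w)
    (hz : z.IsBallot (-w)) (ht : t <+: y ++ z) : (t.map w).sum ≤ (y.map w).sum := by
  obtain ⟨r, hr⟩ := ht
  rcases append_eq_append_iff.mp hr with ⟨u, rfl, -⟩ | ⟨u, rfl, rfl⟩
  · have := hy.sum_nonneg_of_suffix (suffix_append t u)
    simp only [map_append, sum_append]
    linarith
  · have := hz.sum_nonneg (prefix_append u r)
    simp only [sum_map_neg, map_append, sum_append] at this ⊢
    linarith

theorem ballot_split_unique {y z y' z' : List α} (hy : y.reverse.IsBallot w)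
    (hz : z.IsBallot (-w)) (hy' : y'.reverse.IsBallot w) (hz' : z'.IsBallot (-w))
    (h : y ++ z = y' ++ z') : y = y' ∧ z = z' := by
  -- a common piece `u` would be a suffix of one block and a prefix of the next
  have key : ∀ {y z : List α} (u : List α), (y ++ u).reverse.IsBallot w →
      (u ++ z).IsBallot (-w) → u = [] := by
    intro y z u hyu huz
    by_contra hne
    have hpos := hyu.sum_pos_of_suffix (suffix_append y u) hne
    have hneg := huz u (prefix_append u z) hne
    rw [sum_map_neg] at hneg
    linarith
  rcases append_eq_append_iff.mp h with ⟨u, rfl, rfl⟩ | ⟨u, rfl, rfl⟩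
  · obtain rfl := key u hy' hz
    simp
  · obtain rfl := key u hy hz'
    simp

theorem exists_ballot_split (l : List α)
    (h : ∀ t, t <:+: l → t ≠ [] → (t.map w).sum ≠ 0) :
    ∃ y z, y.reverse.IsBallot w ∧ z.IsBallot (-w) ∧ y ++ z = l := by
  induction l with
  | nil => exact ⟨[], [], isBallot_nil, isBallot_nil, rfl⟩
  | cons x l ih =>
    obtain ⟨y, z, hy, hz, rfl⟩ := ih fun t ht => h t (infix_cons ht)
    have hx : w x + (y.map w).sum ≠ 0 := by
      simpa using h (x :: y) (prefix_append (x :: y) z).isInfix (cons_ne_nil x y)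
    rcases hx.lt_or_gt with hneg | hpos
    · refine ⟨[], x :: (y ++ z), isBallot_nil, ?_, rfl⟩
      intro t ht hne
      obtain ⟨t, rfl, ht'⟩ := (prefix_cons_iff.mp ht).resolve_left hne
      have := sum_prefix_le_of_ballot_split hy hz ht'
      simp only [map_cons, sum_cons, sum_map_neg, Pi.neg_apply] at this ⊢
      linarith
    · refine ⟨x :: y, z, ?_, hz, rfl⟩
      intro t ht hne
      rw [reverse_cons] at ht
      rcases prefix_concat_iff.mp ht with rfl | ht
      · simpa [add_comm] using hpos
      · exact hy t ht hne

end List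

namespace Nat

theorem doubleFactorial_two_mul_succ_sub_one (k : ℕ) :
    (2 * (k + 1) - 1)‼ = (2 * k + 1) * (2 * k - 1)‼ := by
  cases k with
  | zero => rfl
  | succ k =>
    rw [show 2 * (k + 1 + 1) - 1 = 2 * (k + 1) - 1 + 2 by omega, doubleFactorial_add_two]
    congr 1

/-- Pascal's rule turns the step `n → n + 1` into a Leibniz rule, and since
`(2k + 1)‼ = (2k + 1) (2k - 1)‼` each step multiplies the sum by `2 (n + 1)`. -/
theorem sum_choose_mul_doubleFactorial (n : ℕ) :
    ∑ k ∈ range (n + 1), n.choose k * ((2 * k - 1)‼ * (2 * (n - k) - 1)‼) = 2 ^ n * n ! := by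
  rw [← Finset.Nat.sum_antidiagonal_eq_sum_range_succ
    (fun i j => n.choose i * ((2 * i - 1)‼ * (2 * j - 1)‼))]
  induction n with
  | zero => simp
  | succ n ih =>
    have h := sum_antidiagonal_choose_succ_mul (R := ℕ) (fun i j => (2 * i - 1)‼ * (2 * j - 1)‼) n
    simp only [cast_id] at h
    rw [h, ← sum_add_distrib]
    trans ∑ ij ∈ antidiagonal n, 2 * (n + 1) * (n.choose ij.1 * ((2 * ij.1 - 1)‼ * (2 * ij.2 - 1)‼))
    · refine sum_congr rfl fun ij hij => ?_
      rw [HasAntidiagonal.mem_antidiagonal] at hij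
      rw [← choose_symm_of_eq_add hij.symm, doubleFactorial_two_mul_succ_sub_one,
        doubleFactorial_two_mul_succ_sub_one, ← hij]
      ring
    · rw [← mul_sum, ih, factorial_succ]
      ring

theorem two_pow_mul_doubleFactorial (n : ℕ) : 2 ^ n * (2 * n - 1)‼ = n ! * (2 * n).choose n := by
  have hfac : (2 * n)! = (2 * n)‼ * (2 * n - 1)‼ := by
    cases n with
    | zero => rfl
    | succ m =>
      rw [show 2 * (m + 1) = 2 * m + 1 + 1 by ring, factorial_eq_mul_doubleFactorial]
      rfl
  apply Nat.eq_of_mul_eq_mul_left (factorial_pos n)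
  calc n ! * (2 ^ n * (2 * n - 1)‼) = (2 * n)‼ * (2 * n - 1)‼ := by
        rw [doubleFactorial_two_mul]; ring
    _ = (2 * n).choose n * n ! * (2 * n - n)! := by
        rw [← hfac, choose_mul_factorial_mul_factorial (by omega)]
    _ = n ! * (n ! * (2 * n).choose n) := by
        rw [show 2 * n - n = n by omega]; ring

end Nat

theorem Finset.sum_powerset_doubleFactorial {α : Type*} [DecidableEq α] (s : Finset α) :
    ∑ B ∈ s.powerset, (2 * #B - 1)‼ * (2 * #(s \ B) - 1)‼ = 2 ^ #s * (#s)! := by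
  calc ∑ B ∈ s.powerset, (2 * #B - 1)‼ * (2 * #(s \ B) - 1)‼
      = ∑ B ∈ s.powerset, (2 * #B - 1)‼ * (2 * (#s - #B) - 1)‼ :=
        sum_congr rfl fun B hB => by rw [card_sdiff_of_subset (mem_powerset.mp hB)]
    _ = ∑ k ∈ range (#s + 1), (#s).choose k * ((2 * k - 1)‼ * (2 * (#s - k) - 1)‼) := by
        simp_rw [sum_powerset_apply_card (fun k => (2 * k - 1)‼ * (2 * (#s - k) - 1)‼),
          smul_eq_mul]
    _ = 2 ^ #s * (#s)! := Nat.sum_choose_mul_doubleFactorial _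

section SignedArrangement

variable {ι : Type*}

def signedValue (a : ι → ℝ) (x : ι × ℤˣ) : ℝ := ((x.2 : ℤ) : ℝ) * a x.1

theorem signedValue_neg (a : ι → ℝ) : signedValue (-a) = -signedValue a := by
  ext x
  simp [signedValue]

theorem sum_signedValue_ne_zero {a : ι → ℝ} (ha : LinearIndependent ℚ a) {l : List (ι × ℤˣ)}
    (hl : (l.map Prod.fst).Nodup) (hne : l ≠ []) : (l.map (signedValue a)).sum ≠ 0 := by
  obtain ⟨x, l, rfl⟩ := List.exists_cons_of_ne_nil hne
  let c : ι →₀ ℤ := ((x :: l).map fun y => Finsupp.single y.1 (y.2 : ℤ)).sum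
  have hc : Finsupp.linearCombination ℤ a c = ((x :: l).map (signedValue a)).sum := by
    simp only [List.map_cons, List.sum_cons, map_add, Finsupp.linearCombination_single,
      zsmul_eq_mul, map_list_sum, List.map_map, Function.comp_def, c]
    rfl
  have hcx : c x.1 = x.2 := by
    have hx : x.1 ∉ l.map Prod.fst := (List.nodup_cons.mp (by simpa using hl)).1
    simp only [c, List.map_cons, List.sum_cons, Finsupp.add_apply, Finsupp.single_eq_same,
      add_eq_left]
    rw [← Finsupp.applyAddHom_apply, map_list_sum]
    refine List.sum_eq_zero fun r hr => ?_
    obtain ⟨y, hy, rfl⟩ := List.mem_map.mp (List.map_map ▸ hr)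
    exact Finsupp.single_eq_of_ne fun h => hx (h ▸ List.mem_map_of_mem hy)
  intro h0
  have := linearIndependent_iff.mp (ha.restrict_scalars' ℤ) c (hc.trans h0)
  simpa [hcx] using congrArg (· x.1) this

variable [DecidableEq ι]

/-- A signed permutation of the subfamily indexed by `s`, as its list of (index, sign) pairs. -/
def IsSignedArrangement (s : Finset ι) (l : List (ι × ℤˣ)) : Prop :=
  (l.map Prod.fst).Nodup ∧ (l.map Prod.fst).toFinset = s

namespace IsSignedArrangement

variable {s B : Finset ι} {l y z : List (ι × ℤˣ)}

theorem length_eq (hl : IsSignedArrangement s l) : l.length = #s := by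
  rw [← hl.2, List.toFinset_card_of_nodup hl.1, List.length_map]

theorem empty_iff : IsSignedArrangement ∅ l ↔ l = [] := by
  simp only [IsSignedArrangement, List.toFinset_eq_empty_iff, List.map_eq_nil_iff,
    and_iff_right_iff_imp]
  rintro rfl
  exact List.nodup_nil

theorem cons_iff {x : ι × ℤˣ} :
    IsSignedArrangement s (x :: l) ↔ x.1 ∈ s ∧ IsSignedArrangement (s.erase x.1) l := by
  simp only [IsSignedArrangement, List.map_cons, List.nodup_cons, List.toFinset_cons]
  constructor
  · rintro ⟨⟨hx, hl⟩, rfl⟩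
    simp [hl, hx]
  · rintro ⟨hx, hl, hls⟩
    refine ⟨⟨?_, hl⟩, ?_⟩
    · rw [← List.mem_toFinset, hls]
      exact notMem_erase _ _
    · rw [hls, insert_erase hx]

theorem reverse_iff : IsSignedArrangement s l.reverse ↔ IsSignedArrangement s l := by
  simp [IsSignedArrangement]

theorem map_iff {f : ι × ℤˣ → ι × ℤˣ} (hf : ∀ x, (f x).1 = x.1) :
    IsSignedArrangement s (l.map f) ↔ IsSignedArrangement s l := by
  have : Prod.fst ∘ f = Prod.fst := funext hf
  simp [IsSignedArrangement, this]

theorem of_append (h : IsSignedArrangement s (y ++ z)) :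
    IsSignedArrangement (y.map Prod.fst).toFinset y := by
  rw [IsSignedArrangement, List.map_append] at h
  exact ⟨h.1.of_append_left, rfl⟩

theorem append_iff (hy : IsSignedArrangement B y) (hB : B ⊆ s) :
    IsSignedArrangement s (y ++ z) ↔ IsSignedArrangement (s \ B) z := by
  obtain ⟨hy, rfl⟩ := hy
  simp only [IsSignedArrangement, List.map_append, List.toFinset_append]
  constructor
  · rintro ⟨hyz, rfl⟩
    refine ⟨hyz.of_append_right, (union_sdiff_cancel_left ?_).symm⟩
    exact List.disjoint_toFinset_iff_disjoint.mpr (List.disjoint_of_nodup_append hyz)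
  · rintro ⟨hz, hzs⟩
    refine ⟨hy.append hz ?_, by rw [hzs, union_sdiff_of_subset hB]⟩
    exact List.disjoint_toFinset_iff_disjoint.mp (hzs ▸ disjoint_sdiff)

end IsSignedArrangement

instance [Finite ι] (s : Finset ι) : Finite {l // IsSignedArrangement s l} :=
  (List.finite_length_le _ #s).subset fun _ hl => (IsSignedArrangement.length_eq hl).le

instance [Finite ι] (s : Finset ι) (p : List (ι × ℤˣ) → Prop) :
    Finite {l // IsSignedArrangement s l ∧ p l} :=
  Finite.of_injective (fun l => (⟨l.1, l.2.1⟩ : {l // IsSignedArrangement s l}))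
    fun _ _ h => Subtype.ext (congrArg Subtype.val h :)

theorem card_signedArrangements [Finite ι] (s : Finset ι) :
    Nat.card {l // IsSignedArrangement s l} = 2 ^ #s * (#s)! := by
  induction hs : #s generalizing s with
  | zero =>
    simp_rw [card_eq_zero.mp hs, IsSignedArrangement.empty_iff]
    simp
  | succ n ih =>
    let F : (Σ x : s × ℤˣ, {l // IsSignedArrangement (s.erase x.1) l}) →
        {l // IsSignedArrangement s l} :=
      fun x => ⟨((x.1.1 : ι), x.1.2) :: x.2.1, IsSignedArrangement.cons_iff.mpr ⟨x.1.1.2, x.2.2⟩⟩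
    have hF : F.Bijective := by
      refine ⟨?_, ?_⟩
      · rintro ⟨⟨i, ε⟩, l, hl⟩ ⟨⟨i', ε'⟩, l', hl'⟩ h
        simp only [F, Subtype.mk.injEq, List.cons.injEq, Prod.mk.injEq] at h
        obtain ⟨⟨hi, rfl⟩, rfl⟩ := h
        obtain rfl := Subtype.ext hi
        rfl
      · rintro ⟨_ | ⟨x, l⟩, hl⟩
        · simpa [hs] using hl.length_eq
        · obtain ⟨hx, hl⟩ := IsSignedArrangement.cons_iff.mp hl
          exact ⟨⟨(⟨x.1, hx⟩, x.2), l, hl⟩, rfl⟩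
    rw [← Nat.card_eq_of_bijective F hF, Nat.card_sigma,
      sum_congr rfl fun x _ => ih _ (by rw [card_erase_of_mem x.1.2, hs]; rfl)]
    simp only [sum_const, card_univ, Fintype.card_prod, Fintype.card_coe, hs,
      Fintype.card_units_int, smul_eq_mul, Nat.factorial_succ]
    ring

noncomputable def ballotCount (a : ι → ℝ) (s : Finset ι) : ℕ :=
  Nat.card {l // IsSignedArrangement s l ∧ l.IsBallot (signedValue a)}

theorem ballotCount_empty (a : ι → ℝ) : ballotCount a ∅ = 1 := by
  rw [ballotCount, Nat.card_eq_one_iff_exists]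
  refine ⟨⟨[], IsSignedArrangement.empty_iff.mpr rfl, List.isBallot_nil⟩, fun l => ?_⟩
  exact Subtype.ext (IsSignedArrangement.empty_iff.mp l.2.1)

theorem ballotCount_neg (a : ι → ℝ) (s : Finset ι) : ballotCount (-a) s = ballotCount a s := by
  let flip : ι × ℤˣ → ι × ℤˣ := fun x => (x.1, -x.2)
  have hflip : Function.Involutive (List.map flip) := fun l => by simp [flip, Function.comp_def]
  have hvalue : signedValue a ∘ flip = signedValue (-a) := by
    ext x
    simp [flip, signedValue]
  refine Nat.card_congr (Equiv.subtypeEquiv hflip.toPerm fun l => ?_)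
  simp only [Function.Involutive.coe_toPerm, IsSignedArrangement.map_iff (f := flip) fun _ => rfl,
    List.isBallot_map, hvalue]

theorem card_signedArrangements_eq_sum_ballotCount [Finite ι] {a : ι → ℝ}
    (ha : LinearIndependent ℚ a) (s : Finset ι) :
    Nat.card {l // IsSignedArrangement s l} =
      ∑ B ∈ s.powerset, ballotCount a B * ballotCount a (s \ B) := by
  let F : (Σ B : s.powerset, {y // IsSignedArrangement B y ∧ y.IsBallot (signedValue a)} ×
      {z // IsSignedArrangement (s \ B) z ∧ z.IsBallot (signedValue (-a))}) →
      {l // IsSignedArrangement s l} := fun x =>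
    ⟨x.2.1.1.reverse ++ x.2.2.1, (IsSignedArrangement.append_iff
      (IsSignedArrangement.reverse_iff.mpr x.2.1.2.1) (mem_powerset.mp x.1.2)).mpr x.2.2.2.1⟩
  have hF : F.Bijective := by
    refine ⟨?_, ?_⟩
    · rintro ⟨⟨B, _⟩, ⟨y, hyB, hy⟩, ⟨z, _, hz⟩⟩ ⟨⟨B', _⟩, ⟨y', hyB', hy'⟩, ⟨z', _, hz'⟩⟩ h
      rw [signedValue_neg] at hz hz'
      simp only [F, Subtype.mk.injEq] at h
      obtain ⟨hyy, rfl⟩ := List.ballot_split_unique (by simpa using hy) hz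
        (by simpa using hy') hz' h
      obtain rfl := List.reverse_injective hyy
      obtain rfl : B = B' := hyB.2.symm.trans hyB'.2
      rfl
    · rintro ⟨l, hl⟩
      have hgen : ∀ t, t <:+: l → t ≠ [] → (t.map (signedValue a)).sum ≠ 0 := fun t ht =>
        sum_signedValue_ne_zero ha (hl.1.sublist (ht.sublist.map _))
      obtain ⟨y, z, hy, hz, rfl⟩ := List.exists_ballot_split l hgen
      have hyB := hl.of_append
      have hBs : (y.map Prod.fst).toFinset ⊆ s := by
        rw [← hl.2, List.map_append, List.toFinset_append]
        exact subset_union_left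
      refine ⟨⟨⟨_, mem_powerset.mpr hBs⟩, ⟨y.reverse, IsSignedArrangement.reverse_iff.mpr hyB, hy⟩,
        ⟨z, (IsSignedArrangement.append_iff hyB hBs).mp hl, by rwa [signedValue_neg]⟩⟩, ?_⟩
      simp [F]
  rw [← Nat.card_eq_of_bijective F hF, Nat.card_sigma, ← sum_coe_sort s.powerset]
  refine sum_congr rfl fun B _ => ?_
  rw [Nat.card_prod, ballotCount, ← ballotCount_neg a, ballotCount]

theorem ballotCount_eq_doubleFactorial [Finite ι] {a : ι → ℝ}
    (ha : LinearIndependent ℚ a) (s : Finset ι) : ballotCount a s = (2 * #s - 1)‼ := by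
  induction s using Finset.strongInduction with
  | H s ih =>
  rcases s.eq_empty_or_nonempty with rfl | hs
  · exact ballotCount_empty a
  have hs_mem : s ∈ s.powerset.erase ∅ := mem_erase.mpr ⟨hs.ne_empty, mem_powerset_self s⟩
  have hsplit : ∀ F : Finset ι → ℕ, ∑ B ∈ s.powerset, F B =
      F ∅ + (F s + ∑ B ∈ (s.powerset.erase ∅).erase s, F B) := fun F => by
    rw [← add_sum_erase _ _ (empty_mem_powerset s), ← add_sum_erase _ _ hs_mem]
  have hmid : ∀ B ∈ (s.powerset.erase ∅).erase s,
      ballotCount a B * ballotCount a (s \ B) = (2 * #B - 1)‼ * (2 * #(s \ B) - 1)‼ := by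
    intro B hB
    obtain ⟨hBs, hB0, hB⟩ : B ≠ s ∧ B ≠ ∅ ∧ B ⊆ s := by simpa using hB
    rw [ih B (ssubset_of_subset_of_ne hB hBs),
      ih (s \ B) (sdiff_ssubset hB (nonempty_iff_ne_empty.mpr hB0))]
  have hdec := card_signedArrangements_eq_sum_ballotCount ha s
  rw [card_signedArrangements, ← sum_powerset_doubleFactorial, hsplit, hsplit,
    sum_congr rfl hmid] at hdec
  simp only [card_empty, mul_zero, zero_tsub, Nat.doubleFactorial, sdiff_empty, one_mul,
    sdiff_self, bot_eq_empty, mul_one, ballotCount_empty] at hdec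
  omega

end SignedArrangement

theorem card_signedPermBallot_eq_ballotCount {n : ℕ} (a : Fin n → ℝ) :
    Nat.card {p : Equiv.Perm (Fin n) × (Fin n → ℤˣ) // SignedPermBallot a p} =
      ballotCount a univ := by
  let F : Equiv.Perm (Fin n) × (Fin n → ℤˣ) → {l // IsSignedArrangement univ l} := fun p =>
    ⟨List.ofFn fun i => (p.1 i, p.2 i), by
      refine ⟨?_, ?_⟩
      · simpa [List.map_ofFn, Function.comp_def] using List.nodup_ofFn.mpr p.1.injective
      · ext j
        simpa [List.map_ofFn, Function.comp_def] using p.1.surjective j⟩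
  have hF : F.Bijective := by
    refine Function.Injective.bijective_of_nat_card_le (fun p q h => ?_) ?_
    · have h := List.ofFn_injective (congrArg Subtype.val h)
      exact Prod.ext (Equiv.ext fun i => congrArg Prod.fst (congrFun h i))
        (funext fun i => congrArg Prod.snd (congrFun h i))
    · simp [card_signedArrangements, Nat.card_eq_fintype_card, Fintype.card_perm, mul_comm]
  exact Nat.card_congr (((Equiv.ofBijective F hF).subtypeEquiv fun p =>
    (List.isBallot_ofFn_iff (w := signedValue a) (f := fun i => (p.1 i, p.2 i))).symm).trans
    (Equiv.subtypeSubtypeEquivSubtypeInter _ _))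

theorem card_ballot_signed_perms_eq_general
    (n : ℕ) (a : Fin n → ℝ) (ha : LinearIndependent ℚ a) :
    2 ^ n * Nat.card {p : Equiv.Perm (Fin n) × (Fin n → ℤˣ) // SignedPermBallot a p} =
      Nat.factorial n * Nat.choose (2 * n) n := by
  rw [card_signedPermBallot_eq_ballotCount, ballotCount_eq_doubleFactorial ha, card_univ,
    Fintype.card_fin, Nat.two_pow_mul_doubleFactorial]

/-- For a generic (ℚ-linearly independent) family of `n` reals, the number `b` of signed
permutations with the ballot property satisfies `2^n * b = n! * (2n choose n)`,
i.e. `b = (2n)! / (2^n * n!)`. -/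
theorem card_ballot_signed_perms_eq
    (n : ℕ) (hn : 1 ≤ n) (a : Fin n → ℝ) (ha : LinearIndependent ℚ a) :
    2 ^ n * Nat.card {p : Equiv.Perm (Fin n) × (Fin n → ℤˣ) // SignedPermBallot a p} =
      Nat.factorial n * Nat.choose (2 * n) n :=
  card_ballot_signed_perms_eq_general n a ha
end

section
/- For every n ≥ 0, the number of sequences (s_1,…,s_{2n}) ∈ {−1,+1}^{2n} such that ∑_{i=1}^k s_i ≥ 0 for all 1 ≤ k ≤ 2n equals (2n choose n). -/
/-!
Classify the paths by their final height `u - d` (`u` up-steps, `d` down-steps). Removing the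
last step gives a Pascal-type recursion for the number of nonnegative paths ending at a given
height, solved by the ballot numbers `C(m, d) - C(m, u + 1) = C(m, d) - C(m, d - 1)`. Summing
over `d ≤ m / 2` telescopes to `C(m, m / 2)`.
-/

open Finset

namespace SignPath

variable {m : ℕ}

def partialSum (s : Fin m → ℤˣ) (k : ℕ) : ℤ :=
  ∑ i ∈ univ.filter (fun i : Fin m => (i : ℕ) < k), (s i : ℤ)

def IsNonneg (s : Fin m → ℤˣ) : Prop :=
  ∀ k ≤ m, 0 ≤ partialSum s k

@[simp]
lemma partialSum_zero (s : Fin m → ℤˣ) : partialSum s 0 = 0 := by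
  simp [partialSum]

lemma partialSum_snoc_of_le (s : Fin m → ℤˣ) (x : ℤˣ) {k : ℕ} (hk : k ≤ m) :
    partialSum (Fin.snoc s x : Fin (m + 1) → ℤˣ) k = partialSum s k := by
  simp only [partialSum, sum_filter, Fin.sum_univ_castSucc, Fin.val_castSucc, Fin.snoc_castSucc,
    Fin.snoc_last, Fin.val_last, if_neg (show ¬m < k by omega), add_zero]

lemma partialSum_snoc_self (s : Fin m → ℤˣ) (x : ℤˣ) :
    partialSum (Fin.snoc s x : Fin (m + 1) → ℤˣ) (m + 1) = partialSum s m + x := by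
  simp only [partialSum, sum_filter, Fin.sum_univ_castSucc, Fin.snoc_castSucc, Fin.snoc_last,
    Fin.is_lt, if_true]

lemma partialSum_self (s : Fin m → ℤˣ) : partialSum s m = m - 2 * #{i | s i = -1} := by
  have hs : ∀ i, (s i : ℤ) = 1 - 2 * if s i = -1 then 1 else 0 := fun i => by
    rcases Int.units_eq_one_or (s i) with h | h <;> simp [h]
  rw [partialSum, filter_true_of_mem fun i _ => i.is_lt]
  simp only [hs, sum_sub_distrib, ← mul_sum, sum_boole]
  simp

lemma isNonneg_snoc_iff (s : Fin m → ℤˣ) (x : ℤˣ) :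
    IsNonneg (Fin.snoc s x : Fin (m + 1) → ℤˣ) ↔ IsNonneg s ∧ 0 ≤ partialSum s m + x := by
  constructor
  · intro hs
    refine ⟨fun k hk => ?_, partialSum_snoc_self s x ▸ hs (m + 1) le_rfl⟩
    rw [← partialSum_snoc_of_le s x hk]
    exact hs k (by omega)
  · rintro ⟨hs, hlast⟩ k hk
    rcases Nat.lt_or_ge k (m + 1) with hk' | hk'
    · rw [partialSum_snoc_of_le s x (by omega)]
      exact hs k (by omega)
    · rwa [show k = m + 1 by omega, partialSum_snoc_self]

noncomputable def nonnegPathCount (m : ℕ) (h : ℤ) : ℕ :=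
  Nat.card {s : Fin m → ℤˣ // IsNonneg s ∧ partialSum s m = h}

lemma nonnegPathCount_zero_zero : nonnegPathCount 0 0 = 1 := by
  rw [nonnegPathCount, Nat.card_congr (Equiv.subtypeUnivEquiv fun s => ?_), Nat.card_unique]
  exact ⟨fun k hk => by simp [Nat.le_zero.mp hk], by simp⟩

lemma nonnegPathCount_of_neg {h : ℤ} (hh : h < 0) : nonnegPathCount m h = 0 := by
  rw [nonnegPathCount, Nat.card_eq_zero]
  exact Or.inl ⟨fun ⟨s, hs, hsum⟩ => by have := hs m le_rfl; omega⟩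

lemma nonnegPathCount_of_lt {h : ℤ} (hh : (m : ℤ) < h) : nonnegPathCount m h = 0 := by
  rw [nonnegPathCount, Nat.card_eq_zero]
  exact Or.inl ⟨fun ⟨s, _, hsum⟩ => by rw [partialSum_self] at hsum; omega⟩

lemma nonnegPathCount_succ {h : ℤ} (hh : 0 ≤ h) :
    nonnegPathCount (m + 1) h = nonnegPathCount m (h - 1) + nonnegPathCount m (h + 1) := by
  have e : {s : Fin (m + 1) → ℤˣ // IsNonneg s ∧ partialSum s (m + 1) = h} ≃
      Σ x : ℤˣ, {s : Fin m → ℤˣ // IsNonneg s ∧ partialSum s m = h - x} :=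
    ((Fin.snocEquiv fun _ => ℤˣ).subtypeEquiv fun p => ?_).symm.trans
      (Equiv.subtypeProdEquivSigmaSubtype fun (x : ℤˣ) s => IsNonneg s ∧ partialSum s m = h - x)
  · rw [nonnegPathCount, Nat.card_congr e, Nat.card_sigma, UnitsInt.univ, sum_pair (by decide)]
    simp only [Units.val_one, Units.val_neg, sub_neg_eq_add, nonnegPathCount]
  · obtain ⟨x, s⟩ := p
    change _ ↔ IsNonneg (Fin.snoc s x : Fin (m + 1) → ℤˣ) ∧
      partialSum (Fin.snoc s x : Fin (m + 1) → ℤˣ) (m + 1) = h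
    rw [isNonneg_snoc_iff, partialSum_snoc_self]
    grind

lemma nonnegPathCount_self (m : ℕ) : nonnegPathCount m m = 1 := by
  induction m with
  | zero => exact nonnegPathCount_zero_zero
  | succ m ih =>
    rw [Nat.cast_succ, nonnegPathCount_succ (by positivity), add_sub_cancel_right, ih,
      nonnegPathCount_of_lt (by omega)]

/-- By reflection, `m.choose (u + 1)` counts the paths ending at `u - d` that touch `-1`. -/
lemma nonnegPathCount_add_choose {u d : ℕ} (hm : u + d = m) (hd : d ≤ u + 1) :
    nonnegPathCount m (u - d) + m.choose (u + 1) = m.choose d := by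
  induction m generalizing u d with
  | zero =>
    obtain ⟨rfl, rfl⟩ : u = 0 ∧ d = 0 := by omega
    simp [nonnegPathCount_zero_zero]
  | succ m ih =>
    rcases d with _ | d
    · obtain rfl : u = m + 1 := hm
      simpa using nonnegPathCount_self (m + 1)
    obtain hdu | rfl : d + 1 ≤ u ∨ d = u := by omega
    · obtain ⟨u, rfl⟩ : ∃ u', u = u' + 1 := ⟨u - 1, by omega⟩
      have h₁ := ih (u := u) (d := d + 1) (by omega) (by omega)
      have h₂ := ih (u := u + 1) (d := d) (by omega) (by omega)
      rw [nonnegPathCount_succ (by omega), Nat.choose_succ_succ', Nat.choose_succ_succ',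
        show ((u + 1 : ℕ) : ℤ) - (d + 1 : ℕ) - 1 = u - (d + 1 : ℕ) by push_cast; ring,
        show ((u + 1 : ℕ) : ℤ) - (d + 1 : ℕ) + 1 = (u + 1 : ℕ) - d by push_cast; ring]
      omega
    · rw [nonnegPathCount_of_neg (by omega), zero_add]

lemma sum_nonnegPathCount {k : ℕ} (hk : 2 * k ≤ m) :
    ∑ d ∈ range (k + 1), nonnegPathCount m (m - 2 * d) = m.choose k := by
  induction k with
  | zero => simpa using nonnegPathCount_self m
  | succ k ih =>
    have h := nonnegPathCount_add_choose (m := m) (u := m - (k + 1)) (d := k + 1)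
      (by omega) (by omega)
    rw [show m - (k + 1) + 1 = m - k by omega, Nat.choose_symm (show k ≤ m by omega),
      show ((m - (k + 1) : ℕ) : ℤ) - (k + 1 : ℕ) = m - 2 * (k + 1 : ℕ) by omega] at h
    rw [sum_range_succ, ih (by omega), ← h, add_comm]

lemma card_isNonneg_eq_sum (m : ℕ) :
    Nat.card {s : Fin m → ℤˣ // IsNonneg s} =
      ∑ d ∈ range (m / 2 + 1), nonnegPathCount m (m - 2 * d) := by
  classical
  simp only [nonnegPathCount, Nat.card_eq_fintype_card, Fintype.card_subtype]
  rw [card_eq_sum_card_fiberwise (f := fun s => #{i | s i = -1}) (t := range (m / 2 + 1)) ?_]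
  · refine sum_congr rfl fun d _ => ?_
    rw [filter_filter]
    congr 1
    ext s
    simp only [mem_filter, mem_univ, true_and, partialSum_self]
    exact and_congr_right fun _ => by omega
  · intro s hs
    have := (mem_filter.mp hs).2 m le_rfl
    rw [partialSum_self] at this
    rw [coe_range, Set.mem_Iio]
    dsimp only
    omega

theorem card_isNonneg (m : ℕ) : Nat.card {s : Fin m → ℤˣ // IsNonneg s} = m.choose (m / 2) := by
  rw [card_isNonneg_eq_sum, sum_nonnegPathCount (by omega)]

end SignPath

open SignPath in
/-- The number of `±1`-sequences of length `2n` all of whose partial sums are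
non-negative is `(2n choose n)`.  (Signs are encoded as units of `ℤ`, i.e. `{-1, +1}`.) -/
theorem card_nonneg_partial_sum_sign_sequences (n : ℕ) :
    Nat.card {s : Fin (2 * n) → ℤˣ //
        ∀ k : ℕ, 1 ≤ k → k ≤ 2 * n →
          0 ≤ ∑ i ∈ univ.filter (fun i : Fin (2 * n) => (i : ℕ) < k), (s i : ℤ)} =
      Nat.choose (2 * n) n := by
  have hpred (s : Fin (2 * n) → ℤˣ) :
      (∀ k : ℕ, 1 ≤ k → k ≤ 2 * n → 0 ≤ partialSum s k) ↔ IsNonneg s :=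
    ⟨fun hs k hk => k.eq_zero_or_pos.elim (fun h => h ▸ (partialSum_zero s).ge) (hs k · hk),
      fun hs k _ hk => hs k hk⟩
  refine (Nat.card_congr (Equiv.subtypeEquivRight hpred)).trans ?_
  rw [card_isNonneg, Nat.mul_div_cancel_left n two_pos]
end

section
/- For every n ≥ 1, the number of sequences (s_1,…,s_{2n−1}) ∈ {−1,+1}^{2n−1} such that ∑_{i=1}^k s_i ≥ 0 for all 1 ≤ k ≤ 2n−1 equals (2n−1 choose n), i.e., equals (1/2)·(2n choose n). -/
/-!
Refine the count by the number `j` of entries `-1`. Splitting off the last entry, a sequence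
with nonnegative partial sums and at most `N` entries `-1` is either such a sequence followed by
`+1`, or one with at most `N - 1` entries `-1` and positive total followed by `-1`. For
`2N ≤ m` the positivity constraint is automatic, so these counts satisfy Pascal's rule and equal
`C(m, N)`. Every admissible sequence has `2j ≤ m`, so the total is `C(m, ⌊m/2⌋)`.
-/

open Finset

namespace SignSequence

variable {m : ℕ}

lemma card_filter_snoc {α : Type*} [Fintype α] (P : (Fin (m + 1) → α) → Prop) [DecidablePred P] :
    #{s | P s} = ∑ x : α, #{t : Fin m → α | P (Fin.snoc t x)} := by
  simp only [card_filter]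
  rw [← Fintype.sum_equiv (Fin.snocEquiv fun _ => α)
    (fun p => if P (Fin.snoc p.2 p.1) then 1 else 0) _ fun _ => rfl, Fintype.sum_prod_type]

def partialSum (s : Fin m → ℤˣ) (k : ℕ) : ℤ :=
  ∑ i ∈ univ.filter (fun i : Fin m => (i : ℕ) < k), (s i : ℤ)

def negCount (s : Fin m → ℤˣ) : ℕ := #{i | s i = -1}

def IsNonneg (s : Fin m → ℤˣ) : Prop := ∀ k ≤ m, 0 ≤ partialSum s k

instance : DecidablePred (IsNonneg (m := m)) := fun _ => by unfold IsNonneg; infer_instance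

lemma isNonneg_iff (s : Fin m → ℤˣ) :
    IsNonneg s ↔ ∀ k : ℕ, 1 ≤ k → k ≤ m → 0 ≤ partialSum s k := by
  refine ⟨fun hs k _ hk => hs k hk, fun hs k hk => ?_⟩
  rcases Nat.eq_zero_or_pos k with rfl | hk₀
  · simp [partialSum]
  · exact hs k hk₀ hk

lemma partialSum_snoc (t : Fin m → ℤˣ) (x : ℤˣ) (k : ℕ) :
    partialSum (Fin.snoc t x : Fin (m + 1) → ℤˣ) k =
      partialSum t k + if m < k then (x : ℤ) else 0 := by
  simp only [partialSum, sum_filter, Fin.sum_univ_castSucc, Fin.snoc_castSucc, Fin.snoc_last,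
    Fin.val_castSucc, Fin.val_last]

lemma negCount_snoc (t : Fin m → ℤˣ) (x : ℤˣ) :
    negCount (Fin.snoc t x : Fin (m + 1) → ℤˣ) = negCount t + if x = -1 then 1 else 0 := by
  simp only [negCount, card_filter, Fin.sum_univ_castSucc, Fin.snoc_castSucc, Fin.snoc_last]

lemma partialSum_of_le {k : ℕ} (hk : m ≤ k) (s : Fin m → ℤˣ) :
    partialSum s k = m - 2 * negCount s := by
  have hs : ∀ i, (s i : ℤ) = 1 - 2 * if s i = -1 then 1 else 0 := fun i => by
    rcases Int.units_eq_one_or (s i) with h | h <;> simp [h]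
  rw [partialSum, filter_true_of_mem fun i _ => i.isLt.trans_le hk, Fintype.sum_congr _ _ hs,
    sum_sub_distrib, ← mul_sum, negCount, card_filter]
  simp

lemma IsNonneg.two_mul_negCount_le {s : Fin m → ℤˣ} (hs : IsNonneg s) : 2 * negCount s ≤ m := by
  have := hs m le_rfl
  rw [partialSum_of_le le_rfl] at this
  omega

lemma isNonneg_snoc_iff (t : Fin m → ℤˣ) (x : ℤˣ) :
    IsNonneg (Fin.snoc t x : Fin (m + 1) → ℤˣ) ↔
      IsNonneg t ∧ 0 ≤ (m : ℤ) - 2 * negCount t + x := by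
  simp only [IsNonneg, partialSum_snoc]
  constructor
  · intro h
    refine ⟨fun k hk => ?_, ?_⟩
    · simpa [show ¬ m < k by omega] using h k (by omega)
    · simpa [partialSum_of_le] using h (m + 1) le_rfl
  · rintro ⟨ht, hx⟩ k hk
    rcases le_or_gt k m with hkm | hkm
    · simpa [show ¬ m < k by omega] using ht k hkm
    · simpa [hkm, partialSum_of_le hkm.le] using hx

lemma card_isNonneg_negCount_le_succ (m N : ℕ) :
    #{s : Fin (m + 1) → ℤˣ | IsNonneg s ∧ negCount s ≤ N} =
      #{t : Fin m → ℤˣ | IsNonneg t ∧ negCount t ≤ N} +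
        #{t : Fin m → ℤˣ | IsNonneg t ∧ negCount t + 1 ≤ N ∧ 2 * negCount t < m} := by
  rw [card_filter_snoc, Fintype.sum_eq_add 1 (-1) (by decide) fun x hx => by
    rcases Int.units_eq_one_or x with rfl | rfl <;> simp at hx]
  congr 1 <;> refine congrArg card (filter_congr fun t _ => ?_)
  · simp only [isNonneg_snoc_iff, negCount_snoc, if_neg (by decide : (1 : ℤˣ) ≠ -1), add_zero,
      Units.val_one]
    refine ⟨fun ⟨⟨ht, _⟩, hN⟩ => ⟨ht, hN⟩, fun ⟨ht, hN⟩ => ⟨⟨ht, ?_⟩, hN⟩⟩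
    have := ht.two_mul_negCount_le
    omega
  · simp only [isNonneg_snoc_iff, negCount_snoc, if_pos, Units.val_neg, Units.val_one]
    refine ⟨fun ⟨⟨ht, h⟩, hN⟩ => ⟨ht, hN, by omega⟩, fun ⟨ht, hN, h⟩ => ⟨⟨ht, by omega⟩, hN⟩⟩

theorem card_isNonneg_negCount_le {m N : ℕ} (hN : 2 * N ≤ m) :
    #{s : Fin m → ℤˣ | IsNonneg s ∧ negCount s ≤ N} = m.choose N := by
  induction m generalizing N with
  | zero =>
    obtain rfl : N = 0 := by omega
    decide
  | succ m ih =>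
    rw [card_isNonneg_negCount_le_succ]
    cases N with
    | zero =>
      rw [ih (Nat.zero_le _), filter_false_of_mem fun t _ h => by omega]
      simp
    | succ N =>
      have hlast : #{t : Fin m → ℤˣ | IsNonneg t ∧ negCount t + 1 ≤ N + 1 ∧ 2 * negCount t < m} =
          m.choose N := by
        rw [← ih (N := N) (by omega)]
        exact congrArg card (filter_congr fun t _ => and_congr_right fun _ => by omega)
      have hfirst : #{t : Fin m → ℤˣ | IsNonneg t ∧ negCount t ≤ N + 1} = m.choose (N + 1) := by
        rcases (by omega : 2 * (N + 1) ≤ m ∨ m = 2 * N + 1) with h | rfl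
        · exact ih h
        · rw [Nat.choose_symm_half, ← ih (N := N) (by omega)]
          refine congrArg card (filter_congr fun t _ => ?_)
          exact and_congr_right fun ht => by have := ht.two_mul_negCount_le; omega
      rw [hfirst, hlast, Nat.choose_succ_succ', add_comm]

theorem card_isNonneg (m : ℕ) : #{s : Fin m → ℤˣ | IsNonneg s} = m.choose (m / 2) := by
  rw [← card_isNonneg_negCount_le (Nat.mul_div_le m 2)]
  refine congrArg card (filter_congr fun s _ => ?_)
  exact (and_iff_left_of_imp fun hs => by have := hs.two_mul_negCount_le; omega).symm

end SignSequence

open SignSequence in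
theorem card_nonneg_partial_sum_sign_sequences_odd_general (n : ℕ) :
    Nat.card {s : Fin (2 * n - 1) → ℤˣ //
        ∀ k : ℕ, 1 ≤ k → k ≤ 2 * n - 1 →
          0 ≤ ∑ i ∈ univ.filter (fun i : Fin (2 * n - 1) => (i : ℕ) < k), (s i : ℤ)} =
      Nat.choose (2 * n - 1) n := by
  refine (Nat.card_congr (Equiv.subtypeEquivRight fun s => (isNonneg_iff s).symm)).trans ?_
  rw [Nat.card_eq_fintype_card, Fintype.card_subtype, card_isNonneg]
  cases n with
  | zero => rfl
  | succ n =>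
    rw [show 2 * (n + 1) - 1 = 2 * n + 1 by omega, show (2 * n + 1) / 2 = n by omega,
      Nat.choose_symm_half]

/-- The number of `±1`-sequences of length `2n - 1` all of whose partial sums are
non-negative is `(2n-1 choose n)`, i.e. half of `(2n choose n)`. -/
theorem card_nonneg_partial_sum_sign_sequences_odd (n : ℕ) (hn : 1 ≤ n) :
    Nat.card {s : Fin (2 * n - 1) → ℤˣ //
        ∀ k : ℕ, 1 ≤ k → k ≤ 2 * n - 1 →
          0 ≤ ∑ i ∈ univ.filter (fun i : Fin (2 * n - 1) => (i : ℕ) < k), (s i : ℤ)} =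
      Nat.choose (2 * n - 1) n :=
  card_nonneg_partial_sum_sign_sequences_odd_general n
end

section
/- Let n ≥ 1. An ordered partition (composition) of n is a finite sequence of positive integers summing to n; a composition u majorizes a composition v if ∑_{i=1}^k u_i ≥ ∑_{i=1}^k v_i for every k from 1 up to the length of the shorter of the two sequences. Then 2 times the number of ordered pairs (u, v) of compositions of n such that u majorizes v equals (2n choose n). Equivalently, if u and v are chosen independently and uniformly at random from the 2^{n−1} compositions of n, the probability that u majorizes v is (2n choose n)/2^{2n−1}. -/
/-! Read a composition `u` of `m + 1` as the word `0^(u₁-1) 1 0^(u₂-1) 1 ⋯ 0^(uₗ-1)` of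
length `m`, whose `1`s mark the proper partial sums. Then `u` majorizes `v` exactly when no
prefix of the word of `u` contains more `1`s than the same prefix of the word of `v`. Reading
such a pair of words one letter pair at a time, the surplus of `1`s in the second word moves by
`-1, 0, 0, +1`, that is, by two steps of a simple walk; so the pairs correspond to simple walks
of length `2m` from height `1` that stay nonnegative. By the reflection principle there are
`C(2m, m) + C(2m, m + 1) = C(2m + 1, m)` of these, which is half of `C(2m + 2, m + 1)`. -/

/-- A composition (ordered partition) of `n`: a finite sequence of positive integers
summing to `n`. -/
def IsComposition (n : ℕ) (u : List ℕ) : Prop :=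
  (∀ x ∈ u, 0 < x) ∧ u.sum = n

/-- `u` majorizes `v` if every partial sum of `u` is at least the corresponding
partial sum of `v`, for indices up to the length of the shorter sequence. -/
def CompMajorizes (u v : List ℕ) : Prop :=
  ∀ k : ℕ, 1 ≤ k → k ≤ min u.length v.length → (v.take k).sum ≤ (u.take k).sum

def onesUpTo (w : List Bool) (i : ℕ) : ℕ := (w.take i).count true

@[simp]
lemma onesUpTo_zero (w : List Bool) : onesUpTo w 0 = 0 := by
  simp [onesUpTo]

lemma onesUpTo_cons_succ (b : Bool) (w : List Bool) (i : ℕ) :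
    onesUpTo (b :: w) (i + 1) = onesUpTo w i + b.toNat := by
  cases b <;> simp [onesUpTo]

lemma onesUpTo_replicate_false_append (j : ℕ) (w : List Bool) (i : ℕ) :
    onesUpTo (List.replicate j false ++ w) i = onesUpTo w (i - j) := by
  simp [onesUpTo, List.take_append, List.take_replicate, List.count_replicate]

lemma onesUpTo_append_true (w : List Bool) (i : ℕ) :
    onesUpTo (w ++ [true]) i = onesUpTo w i + if w.length < i then 1 else 0 := by
  rw [onesUpTo, List.take_append, List.count_append, onesUpTo]
  split_ifs with h
  · obtain ⟨j, hj⟩ : ∃ j, i - w.length = j + 1 := ⟨i - w.length - 1, by omega⟩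
    simp [hj]
  · simp [show i - w.length = 0 by omega]

lemma onesUpTo_append_true_le_iff {s t : List Bool} (h : s.length = t.length) :
    (∀ i, onesUpTo (s ++ [true]) i ≤ onesUpTo (t ++ [true]) i) ↔
      ∀ i, onesUpTo s i ≤ onesUpTo t i := by
  simp only [onesUpTo_append_true, h, Nat.add_le_add_iff_right]

-- A part `x` becomes `0^(x-1) 1`, so the `true`s sit exactly at the partial sums.
def toWord : List ℕ → List Bool
  | [] => []
  | x :: u => List.replicate (x - 1) false ++ true :: toWord u

def ofWord (k : ℕ) : List Bool → List ℕ
  | [] => []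
  | false :: w => ofWord (k + 1) w
  | true :: w => (k + 1) :: ofWord 0 w

lemma length_toWord {u : List ℕ} (hu : ∀ x ∈ u, 0 < x) : (toWord u).length = u.sum := by
  induction u with
  | nil => rfl
  | cons x u ih =>
    simp only [List.forall_mem_cons] at hu
    simp only [toWord, List.length_append, List.length_replicate, List.length_cons,
      List.sum_cons, ih hu.2]
    omega

lemma dropLast_toWord_append_true {u : List ℕ} (hu : u ≠ []) :
    (toWord u).dropLast ++ [true] = toWord u := by
  induction u with
  | nil => contradiction
  | cons x u ih =>
    by_cases hne : u = []
    · simp [hne, toWord]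
    · rw [toWord, ← ih hne, ← List.cons_append, ← List.append_assoc, List.dropLast_concat]

lemma ofWord_replicate_false_append (k j : ℕ) (w : List Bool) :
    ofWord k (List.replicate j false ++ true :: w) = (k + j + 1) :: ofWord 0 w := by
  induction j generalizing k with
  | zero => rfl
  | succ j ih =>
    rw [List.replicate_succ, List.cons_append, ofWord, ih]
    congr 2
    omega

lemma ofWord_toWord {u : List ℕ} (hu : ∀ x ∈ u, 0 < x) : ofWord 0 (toWord u) = u := by
  induction u with
  | nil => rfl
  | cons x u ih =>
    simp only [List.forall_mem_cons] at hu
    rw [toWord, ofWord_replicate_false_append, ih hu.2]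
    congr 1
    omega

lemma toWord_ofWord_append_true (k : ℕ) (w : List Bool) :
    toWord (ofWord k (w ++ [true])) = List.replicate k false ++ w ++ [true] := by
  induction w generalizing k with
  | nil => simp [ofWord, toWord]
  | cons b w ih => cases b <;> simp [ofWord, toWord, ih, List.replicate_succ']

lemma pos_of_mem_ofWord {k : ℕ} {w : List Bool} {x : ℕ} (hx : x ∈ ofWord k w) : 0 < x := by
  induction w generalizing k with
  | nil => simp [ofWord] at hx
  | cons b w ih =>
    cases b
    · exact ih hx
    · simp only [ofWord, List.mem_cons] at hx
      rcases hx with rfl | hx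
      · omega
      · exact ih hx

lemma isComposition_ofWord (w : List Bool) :
    IsComposition (w.length + 1) (ofWord 0 (w ++ [true])) := by
  have hpos : ∀ x ∈ ofWord 0 (w ++ [true]), 0 < x := fun _ => pos_of_mem_ofWord
  refine ⟨hpos, ?_⟩
  rw [← length_toWord hpos, toWord_ofWord_append_true]
  simp

lemma lt_onesUpTo_toWord_iff {u : List ℕ} (hu : ∀ x ∈ u, 0 < x) (i k : ℕ) :
    k < onesUpTo (toWord u) i ↔ k < u.length ∧ (u.take (k + 1)).sum ≤ i := by
  induction u generalizing i k with
  | nil => simp [toWord, onesUpTo]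
  | cons x u ih =>
    simp only [List.forall_mem_cons] at hu
    have hcount : onesUpTo (toWord (x :: u)) i =
        if x ≤ i then onesUpTo (toWord u) (i - x) + 1 else 0 := by
      rw [toWord, onesUpTo_replicate_false_append]
      split_ifs with h
      · rw [show i - (x - 1) = i - x + 1 by omega, onesUpTo_cons_succ]
        rfl
      · rw [show i - (x - 1) = 0 by omega, onesUpTo_zero]
    rw [hcount]
    rcases k with _ | k
    · split_ifs <;> simp <;> omega
    · split_ifs with h <;> simp only [List.length_cons, List.take_succ_cons, List.sum_cons]
      · rw [Nat.add_lt_add_iff_right, ih hu.2]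
        omega
      · omega

lemma sum_take_lt_sum {u : List ℕ} (hu : ∀ x ∈ u, 0 < x) {k : ℕ} (hk : k < u.length) :
    (u.take k).sum < u.sum := by
  have hdrop : 0 < (u.drop k).sum :=
    List.sum_pos _ (fun x hx => hu x (List.mem_of_mem_drop hx)) (by simp; omega)
  rw [← List.sum_take_add_sum_drop u k]
  omega

lemma length_le_of_compMajorizes {n : ℕ} {u v : List ℕ} (hu : IsComposition n u)
    (hv : IsComposition n v) (h : CompMajorizes u v) : u.length ≤ v.length := by
  by_contra! hlt
  have hle : (v.take v.length).sum ≤ (u.take v.length).sum := by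
    rcases Nat.eq_zero_or_pos v.length with h0 | hpos
    · simp [h0]
    · exact h _ hpos (by omega)
  have hlt' := sum_take_lt_sum hu.1 hlt
  rw [List.take_length, hv.2] at hle
  rw [hu.2] at hlt'
  omega

theorem compMajorizes_iff_onesUpTo_le {n : ℕ} {u v : List ℕ} (hu : IsComposition n u)
    (hv : IsComposition n v) :
    CompMajorizes u v ↔ ∀ i, onesUpTo (toWord u) i ≤ onesUpTo (toWord v) i := by
  constructor
  · intro h i
    by_contra! hlt
    obtain ⟨hk, hsum⟩ := (lt_onesUpTo_toWord_iff hu.1 i _).1 hlt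
    have hlen := length_le_of_compMajorizes hu hv h
    have hmaj := h (onesUpTo (toWord v) i + 1) (by omega) (by omega)
    have := (lt_onesUpTo_toWord_iff hv.1 i (onesUpTo (toWord v) i)).2 ⟨by omega, by omega⟩
    omega
  · intro h k hk₁ hk
    obtain ⟨j, rfl⟩ : ∃ j, k = j + 1 := ⟨k - 1, by omega⟩
    have hu' := (lt_onesUpTo_toWord_iff hu.1 (u.take (j + 1)).sum j).2 ⟨by omega, le_rfl⟩
    exact ((lt_onesUpTo_toWord_iff hv.1 _ j).1 (hu'.trans_le (h _))).2

def gapPairs : ℕ → ℕ → Finset (List Bool × List Bool)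
  | 0, _ => {([], [])}
  | m + 1, d => ({b : Bool × Bool | b.1.toNat ≤ d + b.2.toNat} : Finset _).biUnion fun b =>
      (gapPairs m (d + b.2.toNat - b.1.toNat)).image fun q => (b.1 :: q.1, b.2 :: q.2)

lemma mem_gapPairs {m d : ℕ} {s t : List Bool} :
    (s, t) ∈ gapPairs m d ↔
      s.length = m ∧ t.length = m ∧ ∀ i, onesUpTo s i ≤ onesUpTo t i + d := by
  induction m generalizing d s t with
  | zero =>
    simp only [gapPairs, Finset.mem_singleton, Prod.mk.injEq, List.length_eq_zero_iff]
    constructor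
    · rintro ⟨rfl, rfl⟩
      simp [onesUpTo]
    · exact fun h => ⟨h.1, h.2.1⟩
  | succ m ih =>
    simp only [gapPairs, Finset.mem_biUnion, Finset.mem_filter, Finset.mem_univ, true_and,
      Finset.mem_image, Prod.exists, ih, Prod.mk.injEq]
    constructor
    · rintro ⟨b₁, b₂, hb, s', t', ⟨hs, ht, hgap⟩, rfl, rfl⟩
      refine ⟨by simp [hs], by simp [ht], ?_⟩
      rintro (_ | i)
      · simp
      · rw [onesUpTo_cons_succ, onesUpTo_cons_succ]
        have := hgap i
        omega
    · rintro ⟨hs, ht, hgap⟩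
      obtain ⟨b₁, s', rfl⟩ := List.exists_cons_of_length_eq_add_one hs
      obtain ⟨b₂, t', rfl⟩ := List.exists_cons_of_length_eq_add_one ht
      have hstep : ∀ i, onesUpTo s' i + b₁.toNat ≤ onesUpTo t' i + b₂.toNat + d := by
        intro i
        have := hgap (i + 1)
        rw [onesUpTo_cons_succ, onesUpTo_cons_succ] at this
        omega
      have h₀ := hstep 0
      simp only [onesUpTo_zero] at h₀
      refine ⟨b₁, b₂, by omega, s', t',
        ⟨by simpa using hs, by simpa using ht, fun i => ?_⟩, rfl, rfl⟩
      have := hstep i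
      omega

lemma card_image_cons (b c : Bool) (s : Finset (List Bool × List Bool)) :
    (s.image fun q => (b :: q.1, c :: q.2)).card = s.card :=
  Finset.card_image_of_injective _ fun p q h => by simpa [Prod.ext_iff] using h

def nonnegWalkCount : ℕ → ℕ → ℕ
  | 0, _ => 1
  | N + 1, 0 => nonnegWalkCount N 1
  | N + 1, a + 1 => nonnegWalkCount N (a + 2) + nonnegWalkCount N a

-- A letter pair acts on the walk at height `2d + 1` as two steps: `(false, true)` as up-up,
-- `(true, false)` as down-down, and equal letters as a step up and a step down.
lemma card_gapPairs (m d : ℕ) :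
    (gapPairs m d).card = nonnegWalkCount (2 * m) (2 * d + 1) := by
  induction m generalizing d with
  | zero => rfl
  | succ m ih =>
    rw [gapPairs, Finset.card_biUnion]
    · simp only [card_image_cons, ih, Finset.sum_filter, Fintype.sum_prod_type,
        Fintype.sum_bool]
      rcases d with _ | d <;> simp [nonnegWalkCount, Nat.mul_succ] <;> ring
    · intro b _ c _ hbc
      simp only [Function.onFun]
      rw [Finset.disjoint_left]
      simp only [Finset.mem_image]
      rintro _ ⟨p, -, rfl⟩ ⟨q, -, h⟩
      simp only [Prod.mk.injEq, List.cons.injEq] at h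
      exact hbc (Prod.ext h.1.1.symm h.2.1.symm)

lemma sum_range_choose_of_lt {N k : ℕ} (h : N < k) :
    ∑ i ∈ Finset.range k, N.choose i = 2 ^ N := by
  rw [← Nat.sum_range_choose]
  exact (Finset.sum_subset (by simpa using h) fun i _ hi =>
    Nat.choose_eq_zero_of_lt (by simpa using hi)).symm

lemma nonnegWalkCount_eq_sum_choose (N a : ℕ) :
    nonnegWalkCount N a = ∑ i ∈ Finset.range (a + 1), N.choose ((N + 1 - a) / 2 + i) := by
  induction N generalizing a with
  | zero =>
    rw [show (0 + 1 - a) / 2 = 0 by omega, Finset.sum_range_succ']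
    simp [nonnegWalkCount]
  | succ N ih =>
    rcases a with _ | a
    · rw [nonnegWalkCount, ih]
      simp [Finset.sum_range_succ, show (N + 2) / 2 = N / 2 + 1 by omega, Nat.choose_succ_succ']
    · rw [nonnegWalkCount, ih, ih]
      obtain h | h := le_or_gt N a
      · rw [show (N + 1 - (a + 2)) / 2 = 0 by omega, show (N + 1 - a) / 2 = 0 by omega,
          show (N + 1 + 1 - (a + 1)) / 2 = 0 by omega]
        simp only [zero_add]
        rw [sum_range_choose_of_lt (by omega), sum_range_choose_of_lt (by omega),
          sum_range_choose_of_lt (by omega), pow_succ]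
        ring
      · set q := (N + 1 - (a + 2)) / 2
        rw [show (N + 1 - a) / 2 = q + 1 by omega,
          show (N + 1 + 1 - (a + 1)) / 2 = q + 1 by omega]
        have hpascal :
            ∀ i, (N + 1).choose (q + 1 + i) = N.choose (q + i) + N.choose (q + i + 1) := by
          intro i
          rw [Nat.add_right_comm, Nat.choose_succ_succ']
        simp only [hpascal, Finset.sum_add_distrib, Finset.sum_range_succ _ (a + 2),
          Finset.sum_range_succ _ (a + 1)]
        ring_nf

lemma ne_nil_of_isComposition_succ {m : ℕ} {u : List ℕ} (hu : IsComposition (m + 1) u) :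
    u ≠ [] := by
  rintro rfl
  simp [IsComposition] at hu

lemma length_dropLast_toWord {m : ℕ} {u : List ℕ} (hu : IsComposition (m + 1) u) :
    (toWord u).dropLast.length = m := by
  simp [length_toWord hu.1, hu.2]

lemma dropLast_toWord_ofWord (w : List Bool) :
    (toWord (ofWord 0 (w ++ [true]))).dropLast = w := by
  simp [toWord_ofWord_append_true]

lemma compMajorizes_iff_onesUpTo_dropLast_le {m : ℕ} {u v : List ℕ}
    (hu : IsComposition (m + 1) u) (hv : IsComposition (m + 1) v) :
    CompMajorizes u v ↔
      ∀ i, onesUpTo (toWord u).dropLast i ≤ onesUpTo (toWord v).dropLast i := by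
  rw [← onesUpTo_append_true_le_iff
      (by rw [length_dropLast_toWord hu, length_dropLast_toWord hv]),
    dropLast_toWord_append_true (ne_nil_of_isComposition_succ hu),
    dropLast_toWord_append_true (ne_nil_of_isComposition_succ hv),
    compMajorizes_iff_onesUpTo_le hu hv]

theorem card_majorizing_eq_card_gapPairs (m : ℕ) :
    Nat.card {p : List ℕ × List ℕ //
        IsComposition (m + 1) p.1 ∧ IsComposition (m + 1) p.2 ∧ CompMajorizes p.1 p.2} =
      (gapPairs m 0).card := by
  rw [← Nat.card_eq_finsetCard]
  refine Nat.card_congr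
    { toFun := fun p => ⟨((toWord p.1.1).dropLast, (toWord p.1.2).dropLast),
        mem_gapPairs.2 ⟨length_dropLast_toWord p.2.1, length_dropLast_toWord p.2.2.1,
          (compMajorizes_iff_onesUpTo_dropLast_le p.2.1 p.2.2.1).1 p.2.2.2⟩⟩
      invFun := fun q => ⟨(ofWord 0 (q.1.1 ++ [true]), ofWord 0 (q.1.2 ++ [true])), by
        obtain ⟨hs, ht, hgap⟩ := mem_gapPairs.1 q.2
        have hu := hs ▸ isComposition_ofWord q.1.1
        have hv := ht ▸ isComposition_ofWord q.1.2
        refine ⟨hu, hv, (compMajorizes_iff_onesUpTo_dropLast_le hu hv).2 ?_⟩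
        simpa only [dropLast_toWord_ofWord, add_zero] using hgap⟩
      left_inv := fun ⟨⟨u, v⟩, hu, hv, _⟩ => by
        simp only [dropLast_toWord_append_true (ne_nil_of_isComposition_succ hu),
          dropLast_toWord_append_true (ne_nil_of_isComposition_succ hv),
          ofWord_toWord hu.1, ofWord_toWord hv.1]
      right_inv := fun q => by simp only [dropLast_toWord_ofWord] }

lemma two_mul_nonnegWalkCount_one (m : ℕ) :
    2 * nonnegWalkCount (2 * m) 1 = (2 * (m + 1)).choose (m + 1) := by
  rw [nonnegWalkCount_eq_sum_choose, show (2 * m + 1 - 1) / 2 = m by omega,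
    Finset.sum_range_succ, Finset.sum_range_one, add_zero, ← Nat.choose_succ_succ', two_mul]
  nth_rewrite 1 [Nat.choose_symm_half]
  rw [← Nat.choose_succ_succ', mul_add_one]

/-- Twice the number of ordered pairs `(u, v)` of compositions of `n` with `u` majorizing
`v` equals `(2n choose n)`; equivalently, a uniformly random composition of `n` majorizes
an independent uniformly random one with probability `(2n choose n) / 2^(2n-1)`. -/
theorem card_majorizing_pairs_of_compositions (n : ℕ) (hn : 1 ≤ n) :
    2 * Nat.card {p : List ℕ × List ℕ //
        IsComposition n p.1 ∧ IsComposition n p.2 ∧ CompMajorizes p.1 p.2} =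
      Nat.choose (2 * n) n := by
  obtain ⟨m, rfl⟩ : ∃ m, n = m + 1 := ⟨n - 1, by omega⟩
  rw [card_majorizing_eq_card_gapPairs, card_gapPairs, mul_zero, zero_add,
    two_mul_nonnegWalkCount_one]
end

section
/- Let m ≥ 1 and let z_1,…,z_m be real numbers with ∑_{i=1}^m z_i = 0, such that no proper nonempty cyclic substring sums to zero: for every starting index k and every length l with 1 ≤ l < m, ∑_{i=0}^{l−1} z_{((k+i−1) mod m)+1} ≠ 0. Then there is exactly one index k ∈ {1,…,m} such that the rotation (z_k, z_{k+1}, …, z_m, z_1, …, z_{k−1}) has all of its partial sums non-negative. -/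
/-!
Let `S j = z 0 + ⋯ + z (j-1)` with indices read mod `m`. Since the full period sums to zero, `S`
is `m`-periodic, and the partial sums of the rotation starting at `k` are `S (k + l) - S k`. So
that rotation has non-negative partial sums exactly when `k` minimises `S` over one period.
A minimiser exists, and it is unique because `S k = S k'` for `k < k' < m` would make the cyclic
substring from `k` of length `k' - k` sum to zero.
-/

open Finset

namespace Spitzer

def cyclicPartialSum {α : Type*} [AddCommMonoid α] (m : ℕ) (z : ℕ → α) (j : ℕ) : α :=
  ∑ i ∈ range j, z (i % m)

lemma cyclicPartialSum_periodic {α : Type*} [AddCommMonoid α] {m : ℕ} {z : ℕ → α}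
    (hsum : ∑ i ∈ range m, z i = 0) : Function.Periodic (cyclicPartialSum m z) m := by
  intro j
  have hperiod : cyclicPartialSum m z m = 0 := by
    rw [← hsum]
    exact sum_congr rfl fun i hi => by rw [Nat.mod_eq_of_lt (mem_range.mp hi)]
  rw [cyclicPartialSum, add_comm, sum_range_add, ← cyclicPartialSum, hperiod, zero_add]
  simp only [Nat.add_mod_left, cyclicPartialSum]

lemma sum_rotation_eq_sub {α : Type*} [AddCommGroup α] (m : ℕ) (z : ℕ → α) (k l : ℕ) :
    ∑ i ∈ range l, z ((k + i) % m) = cyclicPartialSum m z (k + l) - cyclicPartialSum m z k :=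
  (sum_range_add_sub_sum_range (fun i => z (i % m)) k l).symm

lemma injOn_cyclicPartialSum {α : Type*} [AddCommGroup α] {m : ℕ} {z : ℕ → α}
    (hgen : ∀ k < m, ∀ l : ℕ, 1 ≤ l → l < m →
      ∑ i ∈ range l, z ((k + i) % m) ≠ 0) :
    Set.InjOn (cyclicPartialSum m z) (Set.Iio m) := by
  have hlt : ∀ k k', k < k' → k' < m →
      cyclicPartialSum m z k ≠ cyclicPartialSum m z k' := by
    intro k k' hkk' hk' heq
    apply hgen k (hkk'.trans hk') (k' - k) (by omega) (by omega)
    rw [sum_rotation_eq_sub, Nat.add_sub_cancel' hkk'.le, heq, sub_self]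
  intro k hk k' hk' heq
  rcases lt_trichotomy k k' with h | h | h
  · exact absurd heq (hlt k k' h hk')
  · exact h
  · exact absurd heq.symm (hlt k' k h hk)

lemma rotation_nonneg_iff {α : Type*} [AddCommGroup α] [LinearOrder α] [IsOrderedAddMonoid α]
    {m : ℕ} {z : ℕ → α} (hper : Function.Periodic (cyclicPartialSum m z) m)
    {k : ℕ} (hk : k < m) :
    (∀ l : ℕ, 1 ≤ l → l ≤ m → 0 ≤ ∑ i ∈ range l, z ((k + i) % m)) ↔
      ∀ j < m, cyclicPartialSum m z k ≤ cyclicPartialSum m z j := by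
  simp only [sum_rotation_eq_sub, sub_nonneg]
  constructor
  · intro hpos j hj
    rcases lt_trichotomy k j with h | rfl | h
    · simpa [Nat.add_sub_cancel' h.le] using hpos (j - k) (by omega) (by omega)
    · exact le_rfl
    · have := hpos (j + m - k) (by omega) (by omega)
      rwa [Nat.add_sub_cancel' (by omega), hper] at this
  · intro hmin l _ _
    rw [← hper.map_mod_nat (k + l)]
    exact hmin _ (Nat.mod_lt _ (by omega))

end Spitzer

open Spitzer

/-- **Spitzer's lemma.** Let `z 0, …, z (m-1)` be reals summing to `0` such that no proper
nonempty cyclic substring sums to zero.  Then there is exactly one starting index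
`k ∈ {0, …, m-1}` whose rotation `(z k, z (k+1), …)` (indices mod `m`) has all of its
partial sums non-negative. -/
theorem spitzer_unique_rotation (m : ℕ) (hm : 1 ≤ m) (z : ℕ → ℝ)
    (hsum : ∑ i ∈ Finset.range m, z i = 0)
    (hgen : ∀ k < m, ∀ l : ℕ, 1 ≤ l → l < m →
      (∑ i ∈ Finset.range l, z ((k + i) % m)) ≠ 0) :
    ∃! k : ℕ, k < m ∧ ∀ l : ℕ, 1 ≤ l → l ≤ m →
      0 ≤ ∑ i ∈ Finset.range l, z ((k + i) % m) := by
  have hper := cyclicPartialSum_periodic hsum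
  obtain ⟨k, hk, hmin⟩ :=
    exists_min_image (range m) (cyclicPartialSum m z) (nonempty_range_iff.mpr (by omega))
  simp only [mem_range] at hk hmin
  refine ⟨k, ⟨hk, (rotation_nonneg_iff hper hk).2 hmin⟩, ?_⟩
  rintro k' ⟨hk', hpos⟩
  exact injOn_cyclicPartialSum hgen hk' hk
    (le_antisymm ((rotation_nonneg_iff hper hk').1 hpos k hk) (hmin k' hk'))
end

section
/- For every m ≥ 0, the number of ordered pairs (x, y) with x, y ∈ {0,1}^m such that ∑_{i=1}^k x_i ≥ ∑_{i=1}^k y_i for every k with 1 ≤ k ≤ m equals (2m+1 choose m). (In race form: if two racers each, at every one of m steps, stay in place or advance by 1 with equal probability 1/2 independently, then the probability that the first racer is never behind the second is (2m+1 choose m)/4^m.) -/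
/-!
Among never-behind pairs, let `g m j` count those whose final lead is `j`. The last step changes
the lead by `-1`, by `0` (in two ways) or by `+1`, so `g (m+1) j = g m (j-1) + 2 g m j + g m (j+1)`
for `j ≥ 0`, while `g m (-1) = 0`. The ballot numbers `C(2m+1, m+1+j) - C(2m+1, m+2+j)` obey the
same recursion (Pascal's rule applied twice) and vanish at `j = -1` by the symmetry
`C(2m+1, m) = C(2m+1, m+1)`, so they are `g m j`. Summing over `0 ≤ j ≤ m` telescopes to
`C(2m+1, m+1) = C(2m+1, m)`.
-/

open Finset

namespace LazyRace

theorem card_filter_snoc_pairs {α : Type*} [Fintype α] {m : ℕ}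
    (P : (Fin (m + 1) → α) × (Fin (m + 1) → α) → Prop) [DecidablePred P] :
    #{p | P p} = ∑ a : α, ∑ b : α,
      #{q : (Fin m → α) × (Fin m → α) | P (Fin.snoc q.1 a, Fin.snoc q.2 b)} := by
  let e : (α × α) × ((Fin m → α) × (Fin m → α)) ≃
      (Fin (m + 1) → α) × (Fin (m + 1) → α) :=
    (Equiv.prodProdProdComm α α _ _).trans
      ((Fin.snocEquiv fun _ => α).prodCongr (Fin.snocEquiv fun _ => α))
  simp only [card_filter, ← e.sum_comp, Fintype.sum_prod_type]
  rfl

variable {m : ℕ}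

def prefixSum (x : Fin m → Fin 2) (k : ℕ) : ℤ :=
  ∑ i ∈ univ.filter (fun i : Fin m => (i : ℕ) < k), ((x i : ℕ) : ℤ)

theorem prefixSum_nonneg (x : Fin m → Fin 2) (k : ℕ) : 0 ≤ prefixSum x k :=
  sum_nonneg fun _ _ => Int.natCast_nonneg _

theorem prefixSum_le (x : Fin m → Fin 2) (k : ℕ) : prefixSum x k ≤ m := by
  calc prefixSum x k ≤ ∑ _i : Fin m, (1 : ℤ) := by
        refine sum_le_sum_of_subset_of_nonneg (filter_subset _ _) (fun _ _ _ => by positivity)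
          |>.trans (sum_le_sum fun i _ => ?_)
        exact_mod_cast Fin.is_le (x i)
    _ = m := by simp

theorem prefixSum_snoc (x : Fin m → Fin 2) (a : Fin 2) (k : ℕ) :
    prefixSum (Fin.snoc x a) k = prefixSum x k + if m < k then ((a : ℕ) : ℤ) else 0 := by
  simp only [prefixSum, sum_filter, Fin.sum_univ_castSucc, Fin.snoc_castSucc, Fin.snoc_last,
    Fin.val_castSucc, Fin.val_last]

theorem prefixSum_of_le (x : Fin m → Fin 2) {k : ℕ} (hk : m ≤ k) :
    prefixSum x k = prefixSum x m := by
  simp only [prefixSum]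
  congr 1
  ext i
  simp only [mem_filter, mem_univ, true_and, i.isLt, iff_true]
  omega

def lead (p : (Fin m → Fin 2) × (Fin m → Fin 2)) : ℤ :=
  prefixSum p.1 m - prefixSum p.2 m

theorem lead_snoc (x y : Fin m → Fin 2) (a b : Fin 2) :
    lead (Fin.snoc x a, Fin.snoc y b) = lead (x, y) + (a : ℕ) - (b : ℕ) := by
  simp only [lead, prefixSum_snoc, Nat.lt_succ_self, if_true,
    prefixSum_of_le _ (Nat.le_succ m)]
  ring

def NeverBehind (p : (Fin m → Fin 2) × (Fin m → Fin 2)) : Prop :=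
  ∀ k ≤ m, prefixSum p.2 k ≤ prefixSum p.1 k

instance : DecidablePred (NeverBehind (m := m)) := fun p =>
  Nat.decidableBallLE m fun k _ => prefixSum p.2 k ≤ prefixSum p.1 k

theorem NeverBehind.lead_nonneg {p : (Fin m → Fin 2) × (Fin m → Fin 2)} (h : NeverBehind p) :
    0 ≤ lead p :=
  sub_nonneg.mpr (h m le_rfl)

theorem lead_le (p : (Fin m → Fin 2) × (Fin m → Fin 2)) : lead p ≤ m := by
  have := prefixSum_le p.1 m
  have := prefixSum_nonneg p.2 m
  unfold lead
  omega

theorem prefixSum_snoc_of_le (x : Fin m → Fin 2) (a : Fin 2) {k : ℕ} (hk : k ≤ m) :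
    prefixSum (Fin.snoc x a) k = prefixSum x k := by
  simp [prefixSum_snoc, hk.not_gt]

theorem neverBehind_snoc (x y : Fin m → Fin 2) (a b : Fin 2) :
    NeverBehind (Fin.snoc x a, Fin.snoc y b) ↔
      NeverBehind (x, y) ∧ 0 ≤ lead (x, y) + (a : ℕ) - (b : ℕ) := by
  rw [← lead_snoc, lead, sub_nonneg]
  simp only [NeverBehind, Nat.le_succ_iff, or_imp, forall_and, forall_eq]
  refine and_congr_left' (forall₂_congr fun k hk => ?_)
  rw [prefixSum_snoc_of_le _ _ hk, prefixSum_snoc_of_le _ _ hk]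

def goodCount (m : ℕ) (j : ℤ) : ℕ :=
  #{p : (Fin m → Fin 2) × (Fin m → Fin 2) | NeverBehind p ∧ lead p = j}

theorem goodCount_of_neg {j : ℤ} (hj : j < 0) : goodCount m j = 0 := by
  refine card_eq_zero.mpr (filter_eq_empty_iff.mpr fun p _ ⟨hp, hlead⟩ => ?_)
  have := hp.lead_nonneg
  omega

theorem goodCount_zero (j : ℤ) : goodCount 0 j = if j = 0 then 1 else 0 := by
  have hp : ∀ p : (Fin 0 → Fin 2) × (Fin 0 → Fin 2), NeverBehind p ∧ lead p = 0 := fun p =>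
    ⟨fun k _ => by simp [prefixSum], by simp [lead, prefixSum]⟩
  split_ifs with hj
  · simp [goodCount, hj, hp]
  · simp [goodCount, hp, Ne.symm hj]

theorem goodCount_succ {j : ℤ} (hj : 0 ≤ j) :
    goodCount (m + 1) j = goodCount m (j - 1) + 2 * goodCount m j + goodCount m (j + 1) := by
  have step (a b : Fin 2) :
      #{q : (Fin m → Fin 2) × (Fin m → Fin 2) |
        NeverBehind (Fin.snoc q.1 a, Fin.snoc q.2 b) ∧ lead (Fin.snoc q.1 a, Fin.snoc q.2 b) = j}
        = goodCount m (j - (a : ℕ) + (b : ℕ)) := by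
    refine congrArg card (filter_congr fun q _ => ?_)
    rw [neverBehind_snoc, lead_snoc, Prod.mk.eta]
    constructor
    · rintro ⟨⟨hq, -⟩, hlead⟩
      exact ⟨hq, by omega⟩
    · rintro ⟨hq, hlead⟩
      exact ⟨⟨hq, by omega⟩, by omega⟩
  rw [goodCount, card_filter_snoc_pairs]
  simp only [step, Fin.sum_univ_two, Fin.val_zero, Fin.val_one, Nat.cast_zero, Nat.cast_one, sub_zero, add_zero,
    sub_add_cancel]
  ring

def ballot (m : ℕ) (j : ℤ) : ℤ :=
  (2 * m + 1).choose (m + 1 + j).toNat - (2 * m + 1).choose (m + 2 + j).toNat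

theorem ballot_of_add_eq {m k : ℕ} {j : ℤ} (h : m + 1 + j = k) :
    ballot m j = (2 * m + 1).choose k - (2 * m + 1).choose (k + 1) := by
  rw [ballot, show (m + 1 + j).toNat = k by omega, show (m + 2 + j).toNat = k + 1 by omega]

theorem ballot_neg_one (m : ℕ) : ballot m (-1) = 0 := by
  rw [ballot_of_add_eq (k := m) (by ring), sub_eq_zero, ← Nat.choose_symm_half]

theorem ballot_succ (m : ℕ) {j : ℤ} (hj : 0 ≤ j) :
    ballot (m + 1) j = ballot m (j - 1) + 2 * ballot m j + ballot m (j + 1) := by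
  lift j to ℕ using hj
  have pascal (k : ℕ) : (2 * m + 1 + 2).choose (k + 2) =
      (2 * m + 1).choose k + 2 * (2 * m + 1).choose (k + 1) + (2 * m + 1).choose (k + 2) := by
    simp only [Nat.choose_succ_succ]
    ring
  rw [ballot_of_add_eq (k := m + j + 2) (by omega), ballot_of_add_eq (k := m + j) (by omega),
    ballot_of_add_eq (k := m + j + 1) (by omega), ballot_of_add_eq (k := m + j + 2) (by omega),
    show 2 * (m + 1) + 1 = 2 * m + 1 + 2 by ring,
    pascal, pascal (m + j + 1)]
  push_cast
  ring

theorem goodCount_eq_ballot (m : ℕ) {j : ℤ} (hj : -1 ≤ j) : goodCount m j = ballot m j := by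
  induction m generalizing j with
  | zero =>
    rw [goodCount_zero]
    obtain rfl | rfl | hj : j = -1 ∨ j = 0 ∨ 1 ≤ j := by omega
    · simp [ballot]
    · simp [ballot]
    · rw [ballot_of_add_eq (k := (j + 1).toNat) (by omega), if_neg (by omega),
        Nat.choose_eq_zero_of_lt (by omega), Nat.choose_eq_zero_of_lt (by omega)]
      simp
  | succ m ih =>
    obtain rfl | hj : j = -1 ∨ 0 ≤ j := by omega
    · rw [goodCount_of_neg (by norm_num), ballot_neg_one, Nat.cast_zero]
    · rw [goodCount_succ hj, ballot_succ m hj]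
      push_cast
      rw [ih (by omega), ih (by omega), ih (by omega)]

theorem sum_ballot (m : ℕ) : ∑ j ∈ range (m + 1), ballot m j = (2 * m + 1).choose m := by
  have hterm (j : ℕ) : ballot m j = (2 * m + 1).choose (m + 1 + j) -
      ((2 * m + 1).choose (m + 1 + (j + 1)) : ℤ) :=
    ballot_of_add_eq (by push_cast; ring)
  rw [sum_congr rfl fun j _ => hterm j,
    sum_range_sub' (fun j => ((2 * m + 1).choose (m + 1 + j) : ℤ)),
    Nat.choose_eq_zero_of_lt (n := 2 * m + 1) (k := m + 1 + (m + 1)) (by omega),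
    Nat.choose_symm_half]
  simp

theorem card_neverBehind (m : ℕ) :
    #{p : (Fin m → Fin 2) × (Fin m → Fin 2) | NeverBehind p} =
      ∑ j ∈ range (m + 1), goodCount m j := by
  rw [card_eq_sum_card_fiberwise (f := lead) (t := (range (m + 1)).map Nat.castEmbedding), sum_map]
  · simp only [goodCount, filter_filter, Nat.castEmbedding_apply]
  · intro p hp
    have := (mem_filter.mp hp).2.lead_nonneg
    have := lead_le p
    simp only [coe_map, Set.mem_image, mem_coe, mem_range, Nat.castEmbedding_apply]
    exact ⟨(lead p).toNat, by omega, by omega⟩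

end LazyRace

/-- The number of pairs of `{0,1}`-sequences `(x, y)` of length `m` such that every
partial sum of `x` is at least the corresponding partial sum of `y` is `(2m+1 choose m)`.
(In race form: the probability that a racer making `m` lazy unit steps is never behind an
independent identical racer is `(2m+1 choose m) / 4^m`.) -/
theorem card_never_behind_lazy_pairs (m : ℕ) :
    Nat.card {p : (Fin m → Fin 2) × (Fin m → Fin 2) //
        ∀ k : ℕ, 1 ≤ k → k ≤ m →
          (∑ i ∈ univ.filter (fun i : Fin m => (i : ℕ) < k), ((p.2 i : ℕ) : ℤ)) ≤
            ∑ i ∈ univ.filter (fun i : Fin m => (i : ℕ) < k), ((p.1 i : ℕ) : ℤ)} =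
      Nat.choose (2 * m + 1) m := by
  open LazyRace in
  have hiff (p : (Fin m → Fin 2) × (Fin m → Fin 2)) :
      (∀ k : ℕ, 1 ≤ k → k ≤ m → prefixSum p.2 k ≤ prefixSum p.1 k) ↔
        NeverBehind p := by
    refine ⟨fun h k hk => ?_, fun h k _ hk => h k hk⟩
    rcases k.eq_zero_or_pos with rfl | hk0
    · simp [prefixSum]
    · exact h k hk0 hk
  refine (Nat.card_congr (Equiv.subtypeEquivRight hiff)).trans ?_
  rw [Nat.card_eq_fintype_card, Fintype.card_subtype]
  zify
  rw [card_neverBehind]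
  push_cast
  rw [sum_congr rfl fun j _ => goodCount_eq_ballot m (by omega), sum_ballot]
end

section
/- Let μ be a continuous (atomless) probability measure on ℝ giving full measure to the positive reals (0,∞), let n ≥ 1, and let X_1,…,X_n, Y_1,…,Y_n be 2n mutually independent random variables each with distribution μ. Then the probability that ∏_{i=1}^k X_i > ∏_{i=1}^k Y_i for every k with 1 ≤ k ≤ n equals (2n choose n)/4^n. -/
/-!
Taking logarithms, the event says that the random walk with i.i.d. steps `log X i - log Y i`
stays strictly positive; the step law is symmetric and atomless. For such a walk let `p m` be the
probability that its first `m` partial sums are all positive. Almost surely the partial sums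
`S 0, …, S m` attain their maximum at a single time `k`; reversing the first `k` steps and negating
the last `m - k` steps shows that this happens with probability `p k * p (m - k)`. Hence
`∑ k, p k * p (m - k) = 1` for every `m`, a convolution equation with a unique solution satisfying
`p 0 = 1`, and `centralBinom m / 4 ^ m` solves it because
`∑ k, centralBinom k * centralBinom (m - k) = 4 ^ m`.
-/

open MeasureTheory ProbabilityTheory Finset
open scoped ENNReal

namespace Nat

theorem sum_range_centralBinom_mul_centralBinom (n : ℕ) :
    ∑ k ∈ range (n + 1), centralBinom k * centralBinom (n - k) = 4 ^ n := by
  induction n with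
  | zero => simp
  | succ n ih =>
    set c : ℕ → ℤ := fun j => centralBinom j
    -- Gosper's certificate: `(n + 1) c_k c_{n+1-k} - 4 (n + 1) c_k c_{n-k}` telescopes.
    set g : ℕ → ℤ := fun j => j * c j * c (n + 1 - j)
    have step : ∀ k ∈ range (n + 1), (n + 1 : ℤ) * (c k * c (n + 1 - k)) =
        4 * (n + 1) * (c k * c (n - k)) + (g k - g (k + 1)) := by
      intro k hk
      obtain ⟨d, rfl⟩ : ∃ d, n = k + d := ⟨n - k, by grind⟩
      have hk' := Nat.succ_mul_centralBinom_succ k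
      have hd := Nat.succ_mul_centralBinom_succ d
      simp only [c, g, show k + d + 1 - k = d + 1 by omega, show k + d - k = d by omega,
        show k + d + 1 - (k + 1) = d by omega]
      zify at hk' hd
      push_cast
      linear_combination (centralBinom d : ℤ) * hk' + (centralBinom k : ℤ) * hd
    have hsum := Finset.sum_congr rfl step
    rw [Finset.sum_add_distrib, Finset.sum_range_sub', ← Finset.mul_sum, ← Finset.mul_sum] at hsum
    have ihz : ∑ k ∈ range (n + 1), c k * c (n - k) = 4 ^ n := by
      simp only [c]; exact_mod_cast ih
    suffices (n + 1 : ℤ) * ∑ k ∈ range (n + 2), c k * c (n + 1 - k) = (n + 1) * 4 ^ (n + 1) by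
      have := mul_left_cancel₀ (by positivity) this
      simp only [c] at this
      exact_mod_cast this
    rw [Finset.sum_range_succ, mul_add, hsum, ihz]
    simp only [g, c, Nat.sub_self, Nat.sub_zero, centralBinom_zero]
    push_cast
    ring

end Nat

lemma ENNReal.sum_range_centralBinom_div_mul_eq_one (m : ℕ) :
    ∑ k ∈ range (m + 1),
      (Nat.centralBinom k / 4 ^ k : ℝ≥0∞) * (Nat.centralBinom (m - k) / 4 ^ (m - k)) = 1 := by
  have hterm : ∀ k ∈ range (m + 1), (Nat.centralBinom k / 4 ^ k : ℝ≥0∞) *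
      (Nat.centralBinom (m - k) / 4 ^ (m - k)) =
        ((Nat.centralBinom k * Nat.centralBinom (m - k) : ℕ) : ℝ≥0∞) * 4⁻¹ ^ m := by
    intro k hk
    rw [div_eq_mul_inv, div_eq_mul_inv, ENNReal.inv_pow, ENNReal.inv_pow,
      mul_mul_mul_comm, ← pow_add, Nat.add_sub_cancel' (Nat.lt_succ_iff.mp (mem_range.mp hk))]
    push_cast; rfl
  rw [sum_congr rfl hterm, ← sum_mul, ← Nat.cast_sum,
    Nat.sum_range_centralBinom_mul_centralBinom, Nat.cast_pow, Nat.cast_ofNat, ← mul_pow,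
    ENNReal.mul_inv_cancel (by norm_num) (by norm_num), one_pow]

lemma ENNReal.eq_of_sum_range_mul_eq_one {a b : ℕ → ℝ≥0∞} (ha0 : a 0 = 1) (hb0 : b 0 = 1)
    (ha : ∀ m, ∑ k ∈ range (m + 1), a k * a (m - k) = 1)
    (hb : ∀ m, ∑ k ∈ range (m + 1), b k * b (m - k) = 1) : a = b := by
  funext m
  induction m using Nat.strong_induction_on with
  | _ m ih =>
  cases m with
  | zero => rw [ha0, hb0]
  | succ m =>
    have hsplit : ∀ c : ℕ → ℝ≥0∞, c 0 = 1 → ∑ k ∈ range (m + 2), c k * c (m + 1 - k) =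
        ∑ i ∈ range m, c (i + 1) * c (m - i) + 2 * c (m + 1) := by
      intro c hc0
      rw [sum_range_succ, sum_range_succ', hc0]
      simp only [Nat.sub_self, Nat.sub_zero, hc0, Nat.add_sub_add_right]
      ring
    have hmid : ∑ i ∈ range m, a (i + 1) * a (m - i) = ∑ i ∈ range m, b (i + 1) * b (m - i) :=
      sum_congr rfl fun i hi => by
        have := mem_range.mp hi
        rw [ih (i + 1) (by omega), ih (m - i) (by omega)]
    have h := (hsplit a ha0).symm.trans
      ((ha (m + 1)).trans ((hb (m + 1)).symm.trans (hsplit b hb0)))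
    have hfin : ∑ i ∈ range m, b (i + 1) * b (m - i) ≠ ⊤ := ne_top_of_le_ne_top ENNReal.one_ne_top
      (by rw [← hb (m + 1), hsplit b hb0]; exact le_self_add)
    rw [hmid, ENNReal.add_right_inj hfin] at h
    exact (ENNReal.mul_right_inj two_ne_zero ENNReal.ofNat_ne_top).mp h

lemma measure_prod_setOf_fst_eq_eq_zero {β : Type*} [MeasurableSpace β] (ν : Measure ℝ)
    [NullSingletonClass ν] [SFinite ν] (ρ : Measure β) [SFinite ρ] {g : β → ℝ}
    (hg : Measurable g) : (ν.prod ρ) {p | p.1 = g p.2} = 0 := by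
  have hs : MeasurableSet {p : ℝ × β | p.1 = g p.2} :=
    measurableSet_eq_fun measurable_fst (hg.comp measurable_snd)
  rw [Measure.prod_apply_symm hs]
  simp

lemma measure_pi_add_sum_eq_zero {ι : Type*} [Fintype ι] (ν : Measure ℝ)
    [IsProbabilityMeasure ν] [NullSingletonClass ν] {i₀ : ι} {s : Finset ι} (hi₀ : i₀ ∉ s) (c : ℝ) :
    Measure.pi (fun _ : ι => ν) {x | x i₀ + ∑ i ∈ s, x i = c} = 0 := by
  set P := Measure.pi (fun _ : ι => ν)
  set S : (ι → ℝ) → ℝ := fun x => ∑ i ∈ s, x i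
  have hcoord : iIndepFun (fun i (x : ι → ℝ) => x i) P :=
    iIndepFun_pi (X := fun _ => id) fun _ => aemeasurable_id
  have hindep : IndepFun (fun x : ι → ℝ => x i₀) S P := by
    simpa [S, Finset.sum_fn] using
      (hcoord.indepFun_finsetSum_of_notMem (fun i => measurable_pi_apply i) hi₀).symm
  have hS : Measurable S := Finset.measurable_fun_sum _ fun i _ => measurable_pi_apply i
  have hlaw : P.map (fun x => (x i₀, S x)) = ν.prod (P.map S) := by
    rw [(indepFun_iff_map_prod_eq_prod_map_map (measurable_pi_apply i₀).aemeasurable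
      hS.aemeasurable).mp hindep, (measurePreserving_eval (fun _ : ι => ν) i₀).map_eq]
  have hgraph : MeasurableSet {p : ℝ × ℝ | p.1 = c - p.2} :=
    measurableSet_eq_fun measurable_fst (measurable_const.sub measurable_snd)
  have hset :
      {x : ι → ℝ | x i₀ + S x = c} = (fun x => (x i₀, S x)) ⁻¹' {p | p.1 = c - p.2} := by
    ext x; simp [eq_sub_iff_add_eq]
  rw [hset, ← Measure.map_apply ((measurable_pi_apply i₀).prodMk hS) hgraph, hlaw]
  exact measure_prod_setOf_fst_eq_eq_zero ν _ (measurable_const.sub measurable_id)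

lemma measurePreserving_comp_perm {ι α : Type*} [Fintype ι] [MeasurableSpace α] (ν : Measure α)
    [SigmaFinite ν] (e : Equiv.Perm ι) :
    MeasurePreserving (fun x : ι → α => x ∘ e) (Measure.pi fun _ => ν)
      (Measure.pi fun _ => ν) := by
  convert measurePreserving_piCongrLeft (fun _ : ι => ν) e.symm
  funext x
  simp [MeasurableEquiv.piCongrLeft, Equiv.piCongrLeft]

lemma measurePreserving_castAdd_prod_natAdd {α : Type*} [MeasurableSpace α] (ν : Measure α)
    [SigmaFinite ν] (k l : ℕ) :
    MeasurePreserving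
      (fun x : Fin (k + l) → α => (fun i => x (Fin.castAdd l i), fun j => x (Fin.natAdd k j)))
      (Measure.pi fun _ => ν) ((Measure.pi fun _ => ν).prod (Measure.pi fun _ => ν)) := by
  convert (measurePreserving_sumPiEquivProdPi (fun _ : Fin k ⊕ Fin l => ν)).comp
    (measurePreserving_piCongrLeft (fun _ : Fin (k + l) => ν) finSumFinEquiv).symm using 1
  funext x
  refine Prod.ext ?_ ?_ <;> funext i <;>
    simp [MeasurableEquiv.piCongrLeft, Equiv.piCongrLeft, Equiv.piCongrLeft',
      MeasurableEquiv.sumPiEquivProdPi, Equiv.sumPiEquivProdPi]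

lemma map_pi_comp_prodMk_eq_pi_map {Ω ι β γ : Type*} [MeasurableSpace Ω] [MeasurableSpace β]
    [MeasurableSpace γ] [Fintype ι] {P : Measure Ω} {μ : Measure β} [IsProbabilityMeasure μ]
    {X Y : ι → Ω → β} (hX : ∀ i, Measurable (X i)) (hY : ∀ i, Measurable (Y i))
    (hindep : iIndepFun (Sum.elim X Y) P) (hXlaw : ∀ i, P.map (X i) = μ)
    (hYlaw : ∀ i, P.map (Y i) = μ) {g : β × β → γ} (hg : Measurable g) :
    P.map (fun ω i => g (X i ω, Y i ω)) = Measure.pi fun _ => (μ.prod μ).map g := by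
  have hmeas : ∀ j, Measurable (Sum.elim X Y j) := Sum.forall.mpr ⟨hX, hY⟩
  have hjoint : P.map (fun ω j => Sum.elim X Y j ω) = Measure.pi fun _ => μ := by
    rw [hindep.map_fun_eq_pi_map fun j => (hmeas j).aemeasurable]
    congr with j
    cases j <;> simp [hXlaw, hYlaw]
  have hpairs :=
    (measurePreserving_arrowProdEquivProdArrow β β ι (fun _ => μ) (fun _ => μ)).symm.comp
      (measurePreserving_sumPiEquivProdPi (fun _ : ι ⊕ ι => μ))
  rw [← Measure.pi_map_pi fun _ => hg.aemeasurable, ← hpairs.map_eq, ← hjoint,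
    Measure.map_map hpairs.measurable (measurable_pi_lambda _ hmeas),
    Measure.map_map (by fun_prop) (hpairs.measurable.comp (measurable_pi_lambda _ hmeas))]
  rfl

lemma isNegInvariant_map_sub_prod {α : Type*} [MeasurableSpace α] (μ : Measure α) [SFinite μ]
    {f : α → ℝ} (hf : Measurable f) : ((μ.prod μ).map fun p => f p.1 - f p.2).IsNegInvariant := by
  have hg : Measurable fun p : α × α => f p.1 - f p.2 := by fun_prop
  refine ⟨?_⟩
  rw [Measure.neg, Measure.map_map measurable_neg hg]
  conv_rhs => rw [← Measure.prod_swap, Measure.map_map hg measurable_swap]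
  congr 1
  funext p
  simp

lemma nullSingletonClass_map_log_sub_prod {β : Type*} [MeasurableSpace β] (μ : Measure ℝ)
    [NullSingletonClass μ] [SFinite μ] (hμ : ∀ᵐ x ∂μ, 0 < x) (ρ : Measure β) [SFinite ρ]
    {f : β → ℝ} (hf : Measurable f) :
    NullSingletonClass ((μ.prod ρ).map fun p => Real.log p.1 - f p.2) := by
  refine ⟨fun c => ?_⟩
  have hg : Measurable fun p : ℝ × β => Real.log p.1 - f p.2 := by fun_prop
  rw [Measure.map_apply hg (measurableSet_singleton c),
    Measure.prod_apply_symm (hg (measurableSet_singleton c))]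
  have hnonpos : μ {a | ¬ 0 < a} = 0 := ae_iff.mp hμ
  have hfiber : ∀ b, μ ((fun a => (a, b)) ⁻¹'
      ((fun p : ℝ × β => Real.log p.1 - f p.2) ⁻¹' {c})) = 0 := by
    intro b
    refine measure_mono_null (fun a ha => ?_)
      (measure_union_null hnonpos (measure_singleton (Real.exp (c + f b))))
    simp only [Set.mem_preimage, Set.mem_singleton_iff] at ha
    by_cases h : 0 < a
    · right
      rw [Set.mem_singleton_iff, ← ha, sub_add_cancel, Real.exp_log h]
    · exact Or.inl h
  simp [hfiber]

namespace RandomWalk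

def partialSum {m : ℕ} (k : ℕ) (x : Fin m → ℝ) : ℝ :=
  ∑ i ∈ univ.filter (fun i : Fin m => (i : ℕ) < k), x i

def positiveWalks (m : ℕ) : Set (Fin m → ℝ) := {x | ∀ k, 1 ≤ k → k ≤ m → 0 < partialSum k x}

def strictArgmax (m k : ℕ) : Set (Fin m → ℝ) :=
  {x | ∀ j ≤ m, j ≠ k → partialSum j x < partialSum k x}

@[fun_prop]
lemma measurable_partialSum (m k : ℕ) : Measurable (partialSum k : (Fin m → ℝ) → ℝ) :=
  Finset.measurable_sum _ fun i _ => measurable_pi_apply i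

lemma measurableSet_positiveWalks (m : ℕ) : MeasurableSet (positiveWalks m) := by
  simp only [positiveWalks, Set.ofPred_forall]
  exact .iInter fun k => .iInter fun _ => .iInter fun _ =>
    measurableSet_lt measurable_const (measurable_partialSum m k)

lemma measurableSet_strictArgmax (m k : ℕ) : MeasurableSet (strictArgmax m k) := by
  simp only [strictArgmax, Set.ofPred_forall]
  exact .iInter fun j => .iInter fun _ => .iInter fun _ =>
    measurableSet_lt (measurable_partialSum m j) (measurable_partialSum m k)

lemma partialSum_eq_sum_ite {m : ℕ} (k : ℕ) (x : Fin m → ℝ) :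
    partialSum k x = ∑ i : Fin m, if (i : ℕ) < k then x i else 0 :=
  Finset.sum_filter _ _

lemma partialSum_castAdd {k l j : ℕ} (hj : j ≤ k) (x : Fin (k + l) → ℝ) :
    partialSum j x = partialSum j (fun i => x (Fin.castAdd l i)) := by
  rw [partialSum_eq_sum_ite, partialSum_eq_sum_ite, Fin.sum_univ_add]
  have hnat : ∀ i : Fin l, ¬ (k + (i : ℕ) < j) := fun i => by omega
  simp [hnat]

lemma partialSum_add {k l : ℕ} (r : ℕ) (x : Fin (k + l) → ℝ) :
    partialSum (k + r) x =
      partialSum k (fun i => x (Fin.castAdd l i)) + partialSum r (fun j => x (Fin.natAdd k j)) := by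
  simp only [partialSum_eq_sum_ite, Fin.sum_univ_add, Fin.val_castAdd, Fin.val_natAdd]
  congr 1 <;> refine Finset.sum_congr rfl fun i _ => ?_
  · simp only [Fin.is_lt, if_true]; rw [if_pos (by omega)]
  · simp only [Nat.add_lt_add_iff_left]

lemma partialSum_comp_rev {k j : ℕ} (hj : j ≤ k) (x : Fin k → ℝ) :
    partialSum j (x ∘ Fin.rev) = partialSum k x - partialSum (k - j) x := by
  rw [eq_sub_iff_add_eq, partialSum_eq_sum_ite, partialSum_eq_sum_ite, partialSum_eq_sum_ite,
    ← Equiv.sum_comp Fin.revPerm, ← Finset.sum_add_distrib]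
  refine Finset.sum_congr rfl fun i _ => ?_
  simp only [Fin.revPerm_apply, Function.comp_apply, Fin.rev_rev, Fin.val_rev, Fin.is_lt, if_true]
  have := i.is_lt
  split_ifs <;> first | omega | simp

lemma partialSum_neg {m : ℕ} (k : ℕ) (x : Fin m → ℝ) : partialSum k (-x) = -partialSum k x := by
  simp [partialSum]

lemma partialSum_sub_partialSum {m j k : ℕ} (hjk : j ≤ k) (x : Fin m → ℝ) :
    partialSum k x - partialSum j x =
      ∑ i ∈ univ.filter (fun i : Fin m => j ≤ (i : ℕ) ∧ (i : ℕ) < k), x i := by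
  simp only [partialSum_eq_sum_ite, Finset.sum_filter, ← Finset.sum_sub_distrib]
  refine Finset.sum_congr rfl fun i _ => ?_
  split_ifs <;> first | omega | simp

lemma prod_lt_prod_iff_partialSum_log_sub_pos {n : ℕ} {x y : Fin n → ℝ} (hx : ∀ i, 0 < x i)
    (hy : ∀ i, 0 < y i) (k : ℕ) :
    ∏ i ∈ univ.filter (fun i : Fin n => (i : ℕ) < k), y i <
        ∏ i ∈ univ.filter (fun i : Fin n => (i : ℕ) < k), x i ↔
      0 < partialSum k (fun i => Real.log (x i) - Real.log (y i)) := by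
  rw [partialSum, sum_sub_distrib, sub_pos, ← Real.log_prod fun i _ => (hx i).ne',
    ← Real.log_prod fun i _ => (hy i).ne',
    Real.log_lt_log_iff (prod_pos fun i _ => hy i) (prod_pos fun i _ => hx i)]

lemma mem_strictArgmax_iff {k l : ℕ} (x : Fin (k + l) → ℝ) :
    x ∈ strictArgmax (k + l) k ↔
      (fun i => x (Fin.castAdd l i)) ∘ Fin.rev ∈ positiveWalks k ∧
        -(fun j => x (Fin.natAdd k j)) ∈ positiveWalks l := by
  set u := fun i => x (Fin.castAdd l i)
  set v := fun j => x (Fin.natAdd k j)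
  have hu : ∀ j ≤ k, partialSum j x = partialSum j u := fun j hj => partialSum_castAdd hj x
  have hv : ∀ r, partialSum (k + r) x = partialSum k u + partialSum r v :=
    fun r => partialSum_add r x
  simp only [strictArgmax, positiveWalks, Set.mem_ofPred_eq, partialSum_neg]
  constructor
  · intro h
    refine ⟨fun r hr1 hrk => ?_, fun r hr1 hrl => ?_⟩
    · have := h (k - r) (by omega) (by omega)
      rw [hu _ (by omega), hu k le_rfl] at this
      rw [partialSum_comp_rev hrk]
      linarith
    · have := h (k + r) (by omega) (by omega)
      rw [hv, hu k le_rfl] at this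
      linarith
  · rintro ⟨hrev, hneg⟩ j hj hjk
    rcases Nat.lt_or_gt_of_ne hjk with hlt | hgt
    · have := hrev (k - j) (by omega) (by omega)
      rw [partialSum_comp_rev (by omega), Nat.sub_sub_self hlt.le] at this
      rw [hu j hlt.le, hu k le_rfl]
      linarith
    · obtain ⟨r, rfl⟩ := Nat.exists_eq_add_of_le hgt.le
      have := hneg r (by omega) (by omega)
      rw [hv, hu k le_rfl]
      linarith

variable (ν : Measure ℝ) [IsProbabilityMeasure ν]

lemma measure_strictArgmax [ν.IsNegInvariant] (k l : ℕ) :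
    Measure.pi (fun _ => ν) (strictArgmax (k + l) k) =
      Measure.pi (fun _ => ν) (positiveWalks k) * Measure.pi (fun _ => ν) (positiveWalks l) := by
  have hrev := measurePreserving_comp_perm ν (Fin.revPerm (n := k))
  have hneg := Measure.measurePreserving_neg (Measure.pi fun _ : Fin l => ν)
  have hpos := measurableSet_positiveWalks
  have hset : strictArgmax (k + l) k = (fun x => (fun i => x (Fin.castAdd l i),
      fun j => x (Fin.natAdd k j))) ⁻¹'
        (((· ∘ Fin.revPerm) ⁻¹' positiveWalks k) ×ˢ (Neg.neg ⁻¹' positiveWalks l)) := by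
    ext x
    exact mem_strictArgmax_iff x
  rw [hset, (measurePreserving_castAdd_prod_natAdd ν k l).measure_preimage
    ((hrev.measurable (hpos k)).prod (hneg.measurable (hpos l))).nullMeasurableSet,
    Measure.prod_prod, hrev.measure_preimage (hpos k).nullMeasurableSet,
    hneg.measure_preimage (hpos l).nullMeasurableSet]

lemma measure_partialSum_eq_partialSum [NullSingletonClass ν] {m j k : ℕ} (hjk : j < k)
    (hk : k ≤ m) :
    Measure.pi (fun _ => ν) {x : Fin m → ℝ | partialSum j x = partialSum k x} = 0 := by
  set s := univ.filter (fun i : Fin m => j ≤ (i : ℕ) ∧ (i : ℕ) < k)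
  have hj : (⟨j, by omega⟩ : Fin m) ∈ s := by simp [s, hjk]
  have hset : {x : Fin m → ℝ | partialSum j x = partialSum k x} =
      {x | x ⟨j, by omega⟩ + ∑ i ∈ s.erase ⟨j, by omega⟩, x i = 0} := by
    ext x
    rw [Set.mem_ofPred_eq, Set.mem_ofPred_eq, Finset.add_sum_erase _ _ hj,
      ← partialSum_sub_partialSum hjk.le, sub_eq_zero, eq_comm]
  rw [hset]
  exact measure_pi_add_sum_eq_zero ν (Finset.notMem_erase _ _) 0

lemma measure_iUnion_strictArgmax [NullSingletonClass ν] (m : ℕ) :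
    Measure.pi (fun _ => ν) (⋃ k ∈ range (m + 1), strictArgmax m k) = 1 := by
  have hmeas : MeasurableSet (⋃ k ∈ range (m + 1), strictArgmax m k) :=
    .biUnion (Finset.countable_toSet _) fun k _ => measurableSet_strictArgmax m k
  rw [← prob_compl_eq_zero_iff hmeas]
  have hties : (⋃ k ∈ range (m + 1), strictArgmax m k)ᶜ ⊆
      ⋃ (j : ℕ) (k : ℕ) (_ : j < k) (_ : k ≤ m), {x | partialSum j x = partialSum k x} := by
    intro x hx
    obtain ⟨k, hk, hmax⟩ := Finset.exists_max_image (range (m + 1)) (partialSum · x)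
      nonempty_range_add_one
    have hk' : k ≤ m := Nat.lt_succ_iff.mp (mem_range.mp hk)
    have : x ∉ strictArgmax m k := fun h => hx (Set.mem_biUnion hk h)
    simp only [strictArgmax, Set.mem_ofPred_eq, not_forall, not_lt] at this
    obtain ⟨j, hj, hjk, hle⟩ := this
    have heq := le_antisymm (hmax j (mem_range.mpr (Nat.lt_succ_of_le hj))) hle
    simp only [Set.mem_iUnion, Set.mem_ofPred_eq]
    rcases Nat.lt_or_gt_of_ne hjk with h | h
    · exact ⟨j, k, h, hk', heq⟩
    · exact ⟨k, j, h, hj, heq.symm⟩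
  refine measure_mono_null hties (measure_iUnion_null fun j => measure_iUnion_null fun k =>
    measure_iUnion_null fun hjk => measure_iUnion_null fun hk => ?_)
  exact measure_partialSum_eq_partialSum ν hjk hk

lemma sum_measure_positiveWalks_mul [NullSingletonClass ν] [ν.IsNegInvariant] (m : ℕ) :
    ∑ k ∈ range (m + 1), Measure.pi (fun _ => ν) (positiveWalks k) *
      Measure.pi (fun _ => ν) (positiveWalks (m - k)) = 1 := by
  have hdisj : (range (m + 1) : Set ℕ).PairwiseDisjoint (strictArgmax m) :=
    fun j hj k hk hjk => Set.disjoint_left.mpr fun x hxj hxk =>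
      (hxj k (by simp at hk; omega) (Ne.symm hjk)).not_gt (hxk j (by simp at hj; omega) hjk)
  rw [← measure_iUnion_strictArgmax ν m, measure_biUnion_finset hdisj
    fun k _ => measurableSet_strictArgmax m k]
  refine Finset.sum_congr rfl fun k hk => ?_
  obtain ⟨l, rfl⟩ := Nat.exists_eq_add_of_le (Nat.lt_succ_iff.mp (mem_range.mp hk))
  rw [Nat.add_sub_cancel_left, measure_strictArgmax]

lemma measure_positiveWalks_zero : Measure.pi (fun _ : Fin 0 => ν) (positiveWalks 0) = 1 := by
  rw [show positiveWalks 0 = Set.univ from Set.eq_univ_of_forall fun x k hk h0 => by omega,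
    measure_univ]

theorem measure_positiveWalks [NullSingletonClass ν] [ν.IsNegInvariant] (m : ℕ) :
    Measure.pi (fun _ => ν) (positiveWalks m) = Nat.centralBinom m / 4 ^ m :=
  congrFun (ENNReal.eq_of_sum_range_mul_eq_one
    (a := fun m => Measure.pi (fun _ : Fin m => ν) (positiveWalks m))
    (b := fun m => (Nat.centralBinom m / 4 ^ m : ℝ≥0∞)) (measure_positiveWalks_zero ν) (by simp)
    (sum_measure_positiveWalks_mul ν) ENNReal.sum_range_centralBinom_div_mul_eq_one) m

end RandomWalk

open RandomWalk in
theorem random_race_multiplicative_leading_probability_general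
    {Ω : Type*} [MeasurableSpace Ω] (P : Measure Ω)
    (μ : Measure ℝ) [IsProbabilityMeasure μ] (hμ : ∀ x : ℝ, μ {x} = 0)
    (hpos : μ (Set.Ioi (0 : ℝ)) = 1)
    (n : ℕ)
    (X Y : Fin n → Ω → ℝ)
    (hXmeas : ∀ i, Measurable (X i)) (hYmeas : ∀ i, Measurable (Y i))
    (hindep : iIndepFun (Sum.elim X Y) P)
    (hXlaw : ∀ i, Measure.map (X i) P = μ) (hYlaw : ∀ i, Measure.map (Y i) P = μ) :
    P {ω | ∀ k : ℕ, 1 ≤ k → k ≤ n →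
        (∏ i ∈ univ.filter (fun i : Fin n => (i : ℕ) < k), Y i ω) <
          ∏ i ∈ univ.filter (fun i : Fin n => (i : ℕ) < k), X i ω} =
      (Nat.choose (2 * n) n : ℝ≥0∞) / 4 ^ n := by
  have hμpos : ∀ᵐ x ∂μ, 0 < x := (mem_ae_iff_prob_eq_one measurableSet_Ioi).mpr hpos
  have : NullSingletonClass μ := ⟨hμ⟩
  set g : ℝ × ℝ → ℝ := fun p => Real.log p.1 - Real.log p.2
  have hg : Measurable g := by fun_prop
  have : IsProbabilityMeasure ((μ.prod μ).map g) :=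
    Measure.isProbabilityMeasure_map hg.aemeasurable
  have := nullSingletonClass_map_log_sub_prod μ hμpos μ Real.measurable_log
  have := isNegInvariant_map_sub_prod μ Real.measurable_log
  set W : Ω → Fin n → ℝ := fun ω i => g (X i ω, Y i ω)
  have hXYpos : ∀ᵐ ω ∂P, ∀ i, 0 < X i ω ∧ 0 < Y i ω := ae_all_iff.mpr fun i =>
    (ae_of_ae_map (hXmeas i).aemeasurable (by rwa [hXlaw i])).and
      (ae_of_ae_map (hYmeas i).aemeasurable (by rwa [hYlaw i]))
  refine (measure_congr (t := W ⁻¹' positiveWalks n) ?_).trans ?_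
  · rw [Filter.eventuallyEq_set]
    filter_upwards [hXYpos] with ω hω
    simp only [positiveWalks, Set.mem_preimage, Set.mem_ofPred_eq,
      prod_lt_prod_iff_partialSum_log_sub_pos (fun i => (hω i).1) (fun i => (hω i).2)]
    rfl
  · rw [← Measure.map_apply (by fun_prop) (measurableSet_positiveWalks n),
      map_pi_comp_prodMk_eq_pi_map hXmeas hYmeas hindep hXlaw hYlaw hg, measure_positiveWalks,
      Nat.centralBinom_eq_two_mul_choose]

/-- **Multiplicative random race.** If `μ` is an atomless probability measure on `ℝ`
concentrated on the positive reals, and `X 0, …, X (n-1), Y 0, …, Y (n-1)` are `2n`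
mutually independent samples from `μ`, then the probability that every partial product
of the `X`'s strictly exceeds the corresponding partial product of the `Y`'s is
`(2n choose n) / 4^n`. -/
theorem random_race_multiplicative_leading_probability
    {Ω : Type*} [MeasurableSpace Ω] (P : Measure Ω) [IsProbabilityMeasure P]
    (μ : Measure ℝ) [IsProbabilityMeasure μ] (hμ : ∀ x : ℝ, μ {x} = 0)
    (hpos : μ (Set.Ioi (0 : ℝ)) = 1)
    (n : ℕ) (hn : 1 ≤ n)
    (X Y : Fin n → Ω → ℝ)
    (hXmeas : ∀ i, Measurable (X i)) (hYmeas : ∀ i, Measurable (Y i))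
    (hindep : iIndepFun (Sum.elim X Y) P)
    (hXlaw : ∀ i, Measure.map (X i) P = μ) (hYlaw : ∀ i, Measure.map (Y i) P = μ) :
    P {ω | ∀ k : ℕ, 1 ≤ k → k ≤ n →
        (∏ i ∈ univ.filter (fun i : Fin n => (i : ℕ) < k), Y i ω) <
          ∏ i ∈ univ.filter (fun i : Fin n => (i : ℕ) < k), X i ω} =
      (Nat.choose (2 * n) n : ℝ≥0∞) / 4 ^ n :=
  random_race_multiplicative_leading_probability_general P μ hμ hpos n X Y hXmeas hYmeas hindep
    hXlaw hYlaw
end
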